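/- arXiv:1805.04571 — 6 statements merged into one kernel-verified Lean document; each statement's English description precedes it below -/
import Mathlib

section
/- For the path P_n on n vertices and every integer k with 2 ≤ k ≤ n, the Steiner k-Wiener index equals SW_k(P_n) = ((k-1)(n+1)/(k+1))·C(n,k). -/
open scoped Classical
open Finset

noncomputable def steinerDist {V : Type*} (G : SimpleGraph V) (S : Finset V) : ℕ :=
  sInf {m : ℕ | ∃ H : G.Subgraph, H.Connected ∧ ↑S ⊆ H.verts ∧ H.edgeSet.ncard = m}

noncomputable def swk {V : Type*} [Fintype V] (k : ℕ) (G : SimpleGraph V) : ℕ :=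
  ∑ S ∈ Finset.powersetCard k (Finset.univ : Finset V), steinerDist G S

noncomputable def wswk {V : Type*} [Fintype V] (k : ℕ) (G : SimpleGraph V) (c : V → ℕ) : ℕ :=
  ∑ S ∈ Finset.powersetCard k (Finset.univ : Finset (Σ v : V, Fin (c v))), steinerDist G (S.image Sigma.fst)


/-- Any walk in the path graph from `x` to `y` with `x ≤ m < y` crosses the edge `{m, m+1}`. -/
lemma path_walk_crossing {n m : ℕ} {x y : Fin n}
    (q : (SimpleGraph.pathGraph n).Walk x y) :
    x.val ≤ m → m < y.val →
      ∃ u v : Fin n, u.val = m ∧ v.val = m + 1 ∧ s(u, v) ∈ q.edges := by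
  induction q with
  | nil => intro h1 h2; omega
  | @cons a c b h q' ih =>
    intro h1 h2
    rcases SimpleGraph.pathGraph_adj.mp h with hac | hac
    · by_cases hc : c.val ≤ m
      · obtain ⟨u, v, hu, hv, hmem⟩ := ih hc h2
        exact ⟨u, v, hu, hv, by simp [SimpleGraph.Walk.edges_cons, hmem]⟩
      · have hx : a.val = m := by omega
        exact ⟨a, c, hx, by omega, by simp [SimpleGraph.Walk.edges_cons]⟩
    · have hc : c.val ≤ m := by omega
      obtain ⟨u, v, hu, hv, hmem⟩ := ih hc h2
      exact ⟨u, v, hu, hv, by simp [SimpleGraph.Walk.edges_cons, hmem]⟩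

/-- There is a walk in the path graph from `a` up to `b` of length `d = b - a`
whose support contains every vertex in between. -/
lemma path_walk_up {n : ℕ} : ∀ (d : ℕ) (a b : Fin n), a.val + d = b.val →
    ∃ w : (SimpleGraph.pathGraph n).Walk a b, w.edges.length = d ∧
      ∀ c : Fin n, a.val ≤ c.val → c.val ≤ b.val → c ∈ w.support := by
  intro d
  induction d with
  | zero =>
    intro a b h
    have hab : a = b := Fin.ext (by omega)
    subst hab
    exact ⟨SimpleGraph.Walk.nil, rfl, fun c h1 h2 => by
      have : c = a := Fin.ext (by omega)
      simp [this]⟩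
  | succ d ih =>
    intro a b h
    have ha1 : a.val + 1 < n := by have := b.isLt; omega
    set a' : Fin n := ⟨a.val + 1, ha1⟩ with ha'
    have hadj : (SimpleGraph.pathGraph n).Adj a a' :=
      SimpleGraph.pathGraph_adj.mpr (Or.inl rfl)
    obtain ⟨w', hl, hs⟩ := ih a' b (by simp [ha']; omega)
    refine ⟨SimpleGraph.Walk.cons hadj w', by simp [hl], ?_⟩
    intro c h1 h2
    rw [SimpleGraph.Walk.support_cons]
    by_cases hc : c.val = a.val
    · have : c = a := Fin.ext hc
      simp [this]
    · have := hs c (by simp [ha']; omega) h2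
      simp [this]

lemma steinerDist_path {n : ℕ} (S : Finset (Fin n)) (hS : S.Nonempty) :
    steinerDist (SimpleGraph.pathGraph n) S = (S.max' hS).val - (S.min' hS).val := by
  set a : Fin n := S.min' hS with hadef
  set b : Fin n := S.max' hS with hbdef
  have hab : a.val ≤ b.val := S.min'_le _ (S.max'_mem hS)
  -- lower bound: every admissible subgraph has at least b - a edges
  have lb : ∀ H : (SimpleGraph.pathGraph n).Subgraph, H.Connected → ↑S ⊆ H.verts →
      b.val - a.val ≤ H.edgeSet.ncard := by
    intro H hconn hsub
    have haH : a ∈ H.verts := hsub (S.min'_mem hS)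
    have hbH : b ∈ H.verts := hsub (S.max'_mem hS)
    obtain ⟨p⟩ := hconn ⟨a, haH⟩ ⟨b, hbH⟩
    let q := p.map H.hom
    have hq : ∀ e ∈ q.edges, e ∈ H.edgeSet := by
      intro e he
      rw [SimpleGraph.Walk.edges_map, List.mem_map] at he
      obtain ⟨e', he', rfl⟩ := he
      have := p.edges_subset_edgeSet he'
      revert this
      induction e' using Sym2.ind with
      | _ u v =>
        intro hadj
        rw [SimpleGraph.mem_edgeSet, SimpleGraph.Subgraph.coe_adj] at hadj
        simpa [Sym2.map_pair_eq] using hadj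
    have hfin : H.edgeSet.Finite := Set.toFinite _
    -- injection from Ico a.val b.val into the edge set
    classical
    set f : ℕ → Sym2 (Fin n) := fun m =>
      if h : m + 1 < n then s((⟨m, by omega⟩ : Fin n), (⟨m + 1, h⟩ : Fin n)) else s(a, a)
      with hfdef
    have hmaps : ∀ m ∈ Finset.Ico a.val b.val, f m ∈ hfin.toFinset := by
      intro m hm
      rw [Finset.mem_Ico] at hm
      have hmn : m + 1 < n := by have := b.isLt; omega
      obtain ⟨u, v, hu, hv, hmem⟩ := path_walk_crossing q hm.1 hm.2
      have hfm : f m = s(u, v) := by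
        have h1 : (⟨m, by omega⟩ : Fin n) = u := Fin.ext (by simp [hu])
        have h2 : (⟨m + 1, hmn⟩ : Fin n) = v := Fin.ext (by simp [hv])
        rw [hfdef]
        simp only [dif_pos hmn, h1, h2]
      rw [Set.Finite.mem_toFinset, hfm]
      exact hq _ hmem
    have hinj : Set.InjOn f (Finset.Ico a.val b.val) := by
      intro m1 h1 m2 h2 he
      simp only [Finset.coe_Ico, Set.mem_Ico] at h1 h2
      have hm1 : m1 + 1 < n := by have := b.isLt; omega
      have hm2 : m2 + 1 < n := by have := b.isLt; omega
      rw [hfdef] at he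
      simp only [dif_pos hm1, dif_pos hm2, Sym2.eq, Sym2.rel_iff', Prod.mk.injEq,
        Prod.swap_prod_mk, Fin.mk.injEq] at he
      omega
    calc b.val - a.val = (Finset.Ico a.val b.val).card := by rw [Nat.card_Ico]
      _ ≤ hfin.toFinset.card := Finset.card_le_card_of_injOn f hmaps hinj
      _ = H.edgeSet.ncard := (Set.ncard_eq_toFinset_card _ hfin).symm
  -- the admissible set
  set T : Set ℕ := {m : ℕ | ∃ H : (SimpleGraph.pathGraph n).Subgraph,
      H.Connected ∧ ↑S ⊆ H.verts ∧ H.edgeSet.ncard = m} with hT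
  obtain ⟨w, hwl, hws⟩ := path_walk_up (b.val - a.val) a b (by omega)
  have hmemT : w.toSubgraph.edgeSet.ncard ∈ T := by
    refine ⟨w.toSubgraph, w.toSubgraph_connected, ?_, rfl⟩
    intro s hs
    rw [SimpleGraph.Walk.verts_toSubgraph]
    have hs' : s ∈ S := hs
    exact hws s (S.min'_le s hs') (S.le_max' s hs')
  have hub : w.toSubgraph.edgeSet.ncard ≤ b.val - a.val := by
    rw [SimpleGraph.Walk.edgeSet_toSubgraph]
    calc {e | e ∈ w.edges}.ncard = (w.edges.toFinset : Set (Sym2 (Fin n))).ncard := by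
          congr 1; ext e; simp
      _ = w.edges.toFinset.card := Set.ncard_coe_finset _
      _ ≤ w.edges.length := w.edges.toFinset_card_le
      _ = b.val - a.val := hwl
  refine le_antisymm (le_trans (Nat.sInf_le hmemT) hub) ?_
  obtain ⟨H, hc, hsub, hcard⟩ := Nat.sInf_mem (⟨_, hmemT⟩ : T.Nonempty)
  have hdist : steinerDist (SimpleGraph.pathGraph n) S = sInf T := rfl
  rw [hdist, ← hcard]
  exact lb H hc hsub

/-- hockey stick -/
lemma hockey (j : ℕ) : ∀ N : ℕ, ∑ m ∈ range N, Nat.choose m j = Nat.choose N (j + 1) := by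
  intro N
  induction N with
  | zero => simp
  | succ N ih =>
    rw [Finset.sum_range_succ, ih, Nat.choose_succ_succ']
    omega

lemma count_good (n k m : ℕ) (hm : m < n) (hk : 1 ≤ k) :
    ((Finset.powersetCard k (Finset.univ : Finset (Fin n))).filter
      (fun S => (∃ a ∈ S, a.val ≤ m) ∧ (∃ b ∈ S, m < b.val))).card
      + (Nat.choose (m + 1) k + Nat.choose (n - 1 - m) k) = Nat.choose n k := by
  classical
  set A : Finset (Fin n) := Finset.univ.filter (fun a : Fin n => a.val ≤ m) with hA
  set B : Finset (Fin n) := Finset.univ.filter (fun a : Fin n => m < a.val) with hB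
  have hAcard : A.card = m + 1 := by
    have h : ∀ i ∈ Finset.range (m + 1), i < n := fun i hi => by
      rw [Finset.mem_range] at hi; omega
    have heq : A = (Finset.range (m + 1)).attachFin h := by
      ext a
      rw [hA, Finset.mem_filter, Finset.mem_attachFin, Finset.mem_range]
      simp [Nat.lt_succ_iff]
    rw [heq, Finset.card_attachFin, Finset.card_range]
  have hBcard : B.card = n - 1 - m := by
    have heq : B = Finset.univ \ A := by
      ext a
      rw [hB, hA, Finset.mem_sdiff, Finset.mem_filter, Finset.mem_filter]
      simp [not_le]
    rw [heq, Finset.card_sdiff_of_subset (Finset.subset_univ A), Finset.card_univ, Fintype.card_fin,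
      hAcard]
    omega
  have hsubA : ((Finset.powersetCard k (Finset.univ : Finset (Fin n))).filter
      (fun S => S ⊆ A)).card = Nat.choose (m + 1) k := by
    have heq : (Finset.powersetCard k (Finset.univ : Finset (Fin n))).filter (fun S => S ⊆ A)
        = Finset.powersetCard k A := by
      ext S
      simp [Finset.mem_powersetCard, Finset.mem_filter, and_comm]
    rw [heq, Finset.card_powersetCard, hAcard]
  have hsubB : ((Finset.powersetCard k (Finset.univ : Finset (Fin n))).filter
      (fun S => S ⊆ B)).card = Nat.choose (n - 1 - m) k := by
    have heq : (Finset.powersetCard k (Finset.univ : Finset (Fin n))).filter (fun S => S ⊆ B)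
        = Finset.powersetCard k B := by
      ext S
      simp [Finset.mem_powersetCard, Finset.mem_filter, and_comm]
    rw [heq, Finset.card_powersetCard, hBcard]
  have hneg : (Finset.powersetCard k (Finset.univ : Finset (Fin n))).filter
      (fun S => ¬ ((∃ a ∈ S, a.val ≤ m) ∧ (∃ b ∈ S, m < b.val)))
      = ((Finset.powersetCard k (Finset.univ : Finset (Fin n))).filter (fun S => S ⊆ A))
        ∪ ((Finset.powersetCard k (Finset.univ : Finset (Fin n))).filter (fun S => S ⊆ B)) := by
    ext S
    simp only [Finset.mem_filter, Finset.mem_union, Finset.mem_powersetCard]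
    constructor
    · rintro ⟨hS, hnot⟩
      by_cases hall : ∀ a ∈ S, a.val ≤ m
      · exact Or.inl ⟨hS, fun x hx => by
          rw [hA, Finset.mem_filter]; exact ⟨Finset.mem_univ _, hall x hx⟩⟩
      · push_neg at hall
        obtain ⟨b, hb, hbm⟩ := hall
        refine Or.inr ⟨hS, fun x hx => ?_⟩
        rw [hB, Finset.mem_filter]
        refine ⟨Finset.mem_univ _, ?_⟩
        by_contra hxm
        exact hnot ⟨⟨x, hx, by omega⟩, ⟨b, hb, by omega⟩⟩
    · rintro (⟨hS, hsub⟩ | ⟨hS, hsub⟩) <;> refine ⟨hS, ?_⟩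
      · rintro ⟨⟨a, ha, ham⟩, ⟨b, hb, hbm⟩⟩
        have hbA := hsub hb
        rw [hA, Finset.mem_filter] at hbA
        omega
      · rintro ⟨⟨a, ha, ham⟩, ⟨b, hb, hbm⟩⟩
        have haB := hsub ha
        rw [hB, Finset.mem_filter] at haB
        omega
  have hdisj : Disjoint
      ((Finset.powersetCard k (Finset.univ : Finset (Fin n))).filter (fun S => S ⊆ A))
      ((Finset.powersetCard k (Finset.univ : Finset (Fin n))).filter (fun S => S ⊆ B)) := by
    rw [Finset.disjoint_left]
    intro S hSA hSB
    rw [Finset.mem_filter, Finset.mem_powersetCard] at hSA hSB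
    have hne : S.Nonempty := Finset.card_pos.mp (by omega)
    obtain ⟨x, hx⟩ := hne
    have h1 := hSA.2 hx
    have h2 := hSB.2 hx
    rw [hA, Finset.mem_filter] at h1
    rw [hB, Finset.mem_filter] at h2
    omega
  have htotal := Finset.card_filter_add_card_filter_not
    (s := Finset.powersetCard k (Finset.univ : Finset (Fin n)))
    (p := fun S => (∃ a ∈ S, a.val ≤ m) ∧ (∃ b ∈ S, m < b.val))
  rw [hneg, Finset.card_union_of_disjoint hdisj, hsubA, hsubB] at htotal
  rw [htotal, Finset.card_powersetCard, Finset.card_univ, Fintype.card_fin]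
lemma steiner_eq_count {n k : ℕ} (hk : 1 ≤ k) (S : Finset (Fin n)) (hcard : S.card = k) :
    steinerDist (SimpleGraph.pathGraph n) S
      = ((Finset.range n).filter
          (fun m => (∃ a ∈ S, a.val ≤ m) ∧ (∃ b ∈ S, m < b.val))).card := by
  have hS : S.Nonempty := Finset.card_pos.mp (by omega)
  rw [steinerDist_path S hS]
  have heq : (Finset.range n).filter
      (fun m => (∃ a ∈ S, a.val ≤ m) ∧ (∃ b ∈ S, m < b.val))
      = Finset.Ico (S.min' hS).val (S.max' hS).val := by
    ext m
    rw [Finset.mem_filter, Finset.mem_range, Finset.mem_Ico]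
    constructor
    · rintro ⟨hmn, ⟨a, ha, ham⟩, ⟨b, hb, hbm⟩⟩
      have h1 : (S.min' hS).val ≤ a.val := S.min'_le a ha
      have h2 : b.val ≤ (S.max' hS).val := S.le_max' b hb
      omega
    · rintro ⟨h1, h2⟩
      have h3 := (S.max' hS).isLt
      exact ⟨by omega, ⟨S.min' hS, S.min'_mem hS, h1⟩, ⟨S.max' hS, S.max'_mem hS, h2⟩⟩
  rw [heq, Nat.card_Ico]


/-- For the path P_n on n vertices and 2 ≤ k ≤ n,
SW_k(P_n) = ((k-1)(n+1)/(k+1))·C(n,k), stated multiplied through by (k+1). -/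
theorem steiner_wiener_path (n k : ℕ) (hk2 : 2 ≤ k) (hkn : k ≤ n) :
    (k + 1) * swk k (SimpleGraph.pathGraph n) = (k - 1) * (n + 1) * Nat.choose n k := by
  classical
  have h1 : swk k (SimpleGraph.pathGraph n)
      = ∑ m ∈ Finset.range n, ((Finset.powersetCard k (Finset.univ : Finset (Fin n))).filter
          (fun S => (∃ a ∈ S, a.val ≤ m) ∧ (∃ b ∈ S, m < b.val))).card := by
    rw [swk]
    rw [Finset.sum_congr rfl
      (fun S hS => steiner_eq_count (by omega) S (Finset.mem_powersetCard.mp hS).2)]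
    simp_rw [Finset.card_filter]
    rw [Finset.sum_comm]
  have h2 : ∀ m ∈ Finset.range n,
      ((Finset.powersetCard k (Finset.univ : Finset (Fin n))).filter
        (fun S => (∃ a ∈ S, a.val ≤ m) ∧ (∃ b ∈ S, m < b.val))).card
      + (Nat.choose (m + 1) k + Nat.choose (n - 1 - m) k) = Nat.choose n k :=
    fun m hm => count_good n k m (Finset.mem_range.mp hm) (by omega)
  have hsum : (∑ m ∈ Finset.range n,
        ((Finset.powersetCard k (Finset.univ : Finset (Fin n))).filter
          (fun S => (∃ a ∈ S, a.val ≤ m) ∧ (∃ b ∈ S, m < b.val))).card)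
      + (∑ m ∈ Finset.range n, Nat.choose (m + 1) k)
      + (∑ m ∈ Finset.range n, Nat.choose (n - 1 - m) k) = n * Nat.choose n k := by
    have := Finset.sum_congr rfl h2
    rw [Finset.sum_add_distrib, Finset.sum_add_distrib, Finset.sum_const,
      Finset.card_range, smul_eq_mul] at this
    omega
  have hsum1 : (∑ m ∈ Finset.range n, Nat.choose (m + 1) k) = Nat.choose (n + 1) (k + 1) := by
    have h := hockey k (n + 1)
    rw [Finset.sum_range_succ'] at h
    have h0 : Nat.choose 0 k = 0 := Nat.choose_eq_zero_of_lt (by omega)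
    omega
  have hsum2 : (∑ m ∈ Finset.range n, Nat.choose (n - 1 - m) k) = Nat.choose n (k + 1) := by
    rw [Finset.sum_range_reflect (fun m => Nat.choose m k) n]
    exact hockey k n
  rw [hsum1, hsum2, ← h1] at hsum
  -- now pure arithmetic
  obtain ⟨k', rfl⟩ : ∃ k', k = k' + 2 := ⟨k - 2, by omega⟩
  obtain ⟨d, rfl⟩ : ∃ d, n = (k' + 2) + d := ⟨n - (k' + 2), by omega⟩
  set G := swk (k' + 2) (SimpleGraph.pathGraph (k' + 2 + d)) with hG
  set C := Nat.choose (k' + 2 + d) (k' + 2) with hC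
  have e1 : Nat.choose (k' + 2 + d + 1) (k' + 2 + 1) * (k' + 2 + 1) = (k' + 2 + d + 1) * C := by
    have := Nat.add_one_mul_choose_eq (k' + 2 + d) (k' + 2)
    simpa [Nat.succ_eq_add_one, hC] using this.symm
  have e2 : Nat.choose (k' + 2 + d) (k' + 2 + 1) * (k' + 2 + 1) = C * d := by
    have := Nat.choose_succ_right_eq (k' + 2 + d) (k' + 2)
    simpa [hC] using this
  -- multiply hsum by (k+3)
  have hmul := congrArg (fun x => x * (k' + 2 + 1)) hsum
  simp only [add_mul] at hmul
  rw [e1, e2] at hmul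
  -- goal
  have hsub : k' + 2 - 1 = k' + 1 := rfl
  rw [hsub]
  have key : (k' + 1) * (k' + 2 + d + 1) * C + ((k' + 2 + d + 1) * C + C * d)
      = (k' + 2 + d) * C * (k' + 2 + 1) := by ring
  have : G * (k' + 2 + 1) + ((k' + 2 + d + 1) * C + C * d)
      = (k' + 1) * (k' + 2 + d + 1) * C + ((k' + 2 + d + 1) * C + C * d) := by
    rw [key]; linarith [hmul]
  have hfin : G * (k' + 2 + 1) = (k' + 1) * (k' + 2 + d + 1) * C := by omega
  calc (k' + 2 + 1) * G = G * (k' + 2 + 1) := by ring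
    _ = (k' + 1) * (k' + 2 + d + 1) * C := hfin
end

section
/- If G is a connected graph of order n and 2 ≤ k ≤ n, then SW_k(G) ≤ ((k-1)(n+1)/(k+1))·C(n,k), with equality when G is a path. -/
/-!
Fix a spanning tree of `G`, rooted and described by parent pointers, and name each tree edge by its
lower endpoint. The subtree spanned by a `k`-set `S` consists of the tree edges that separate `S`,
so `d(S)` is at most their number and `SW_k(G) ≤ (n - 1)·C(n,k) - N`, where `N` counts the pairs
`(S, e)` with `e` not separating `S`. Adding to `S` the endpoint of `e` on the side of `S` gives a
`(k+1)`-set `U` in which that endpoint is a leaf of the subtree spanned by `U`. A tree with at least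
two vertices has two leaves, so every `U` is reached at least twice and `N ≥ 2·C(n,k+1)`; the
identity `(k+1)·C(n,k+1) = (n-k)·C(n,k)` turns this into the bound. When `G` is a path the tree is
`G` itself, `d(S)` is exactly the number of separating edges, and a spanned subtree is a path with
exactly two leaves, so every inequality is an equality.
-/

open scoped Classical
open Finset

/-- A rooted spanning tree of `V` given by parent pointers; `height` decreases towards the root,
so iterating `parent` reaches it. The tree edge `{parent v, v}` is named by its lower endpoint
`v ≠ root`. -/
structure ParentTree (V : Type*) where
  root : V
  parent : V → V
  height : V → ℕ
  parent_root : parent root = root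
  height_parent_lt : ∀ v, v ≠ root → height (parent v) < height v

namespace ParentTree

section Ancestors

variable {V : Type*} (T : ParentTree V)

def IsAncestor (a b : V) : Prop :=
  Relation.ReflTransGen (fun x y => T.parent x = y) b a

variable {T}

@[refl]
lemma IsAncestor.refl (a : V) : T.IsAncestor a a := Relation.ReflTransGen.refl

lemma IsAncestor.trans {a b c : V} (hab : T.IsAncestor a b) (hbc : T.IsAncestor b c) :
    T.IsAncestor a c :=
  Relation.ReflTransGen.trans hbc hab

lemma isAncestor_parent (v : V) : T.IsAncestor (T.parent v) v :=
  Relation.ReflTransGen.single rfl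

lemma IsAncestor.of_parent {a b : V} (h : T.IsAncestor a (T.parent b)) : T.IsAncestor a b :=
  h.trans (isAncestor_parent b)

lemma IsAncestor.parent_of_ne {a b : V} (h : T.IsAncestor a b) (hne : a ≠ b) :
    T.IsAncestor a (T.parent b) := by
  rcases Relation.ReflTransGen.cases_head h with rfl | ⟨c, rfl, hc⟩
  · exact absurd rfl hne
  · exact hc

lemma IsAncestor.eq_or_height_lt {a b : V} (h : T.IsAncestor a b) :
    a = b ∨ T.height a < T.height b := by
  induction h with
  | refl => exact Or.inl rfl
  | @tail c a _ hca ih =>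
    subst hca
    by_cases hc : c = T.root
    · subst hc; rw [T.parent_root]; exact ih
    · have := T.height_parent_lt c hc
      rcases ih with rfl | ih
      · exact Or.inr this
      · exact Or.inr (this.trans ih)

lemma IsAncestor.height_le {a b : V} (h : T.IsAncestor a b) : T.height a ≤ T.height b := by
  rcases h.eq_or_height_lt with rfl | h
  exacts [le_rfl, h.le]

lemma not_isAncestor_parent {v : V} (hv : v ≠ T.root) : ¬T.IsAncestor v (T.parent v) :=
  fun h => (T.height_parent_lt v hv).not_ge h.height_le

lemma IsAncestor.antisymm {a b : V} (hab : T.IsAncestor a b) (hba : T.IsAncestor b a) :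
    a = b := by
  rcases hab.eq_or_height_lt with h | h
  · exact h
  · exact absurd hba.height_le (not_le.mpr h)

lemma IsAncestor.total {a b c : V} (ha : T.IsAncestor a c) (hb : T.IsAncestor b c) :
    T.IsAncestor a b ∨ T.IsAncestor b a :=
  Relation.ReflTransGen.total_of_right_unique (fun _ _ _ h₁ h₂ => h₁.symm.trans h₂) hb ha

lemma root_isAncestor (v : V) : T.IsAncestor T.root v := by
  induction hv : T.height v using Nat.strong_induction_on generalizing v with
  | _ n ih =>
    by_cases hr : v = T.root
    · rw [hr]
    · exact (ih _ (hv ▸ T.height_parent_lt v hr) _ rfl).of_parent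

lemma IsAncestor.exists_child {a b : V} (h : T.IsAncestor a b) (hne : a ≠ b) :
    ∃ c, c ≠ T.root ∧ T.parent c = a ∧ T.IsAncestor c b := by
  induction h using Relation.ReflTransGen.head_induction_on with
  | refl => exact absurd rfl hne
  | @head x y hxy hya ih =>
    subst hxy
    by_cases hy : T.parent x = a
    · refine ⟨x, fun hx => hne ?_, hy, .refl x⟩
      rw [← hy, hx, T.parent_root]
    · obtain ⟨c, hc, hca, hcy⟩ := ih (Ne.symm hy)
      exact ⟨c, hc, hca, hcy.of_parent⟩

lemma injOn_parentEdge : Set.InjOn (fun v => s(T.parent v, v)) {v | v ≠ T.root} := by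
  intro v hv w hw h
  rcases Sym2.eq_iff.mp h with ⟨-, h⟩ | ⟨h₁, h₂⟩
  · exact h
  · have hv' := T.height_parent_lt v hv
    have hw' := T.height_parent_lt w hw
    rw [h₁] at hv'
    rw [← h₂] at hw'
    omega

variable {U : Finset V}

lemma exists_isLeaf_of_not_isAncestor {m : V} (h : ∃ u ∈ U, ¬T.IsAncestor u m) :
    ∃ w ∈ U, w ≠ m ∧ w ≠ T.root ∧ ∀ u ∈ U, T.IsAncestor w u → u = w := by
  obtain ⟨w, hw, hwmax⟩ := exists_max_image (U.filter (¬T.IsAncestor · m)) T.height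
    (by simpa [Finset.Nonempty] using h)
  rw [mem_filter] at hw
  refine ⟨w, hw.1, fun h => hw.2 (by rw [h]), fun h => hw.2 (h ▸ root_isAncestor m), ?_⟩
  intro u hu hwu
  rcases hwu.eq_or_height_lt with h | hlt
  · exact h.symm
  · by_cases hum : T.IsAncestor u m
    · exact absurd (hwu.trans hum) hw.2
    · exact absurd (hwmax u (mem_filter.mpr ⟨hu, hum⟩)) hlt.not_ge

end Ancestors

section Counting

variable {V : Type*} [Fintype V] (T : ParentTree V)

noncomputable def descendants (a : V) : Finset V := univ.filter (T.IsAncestor a)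

def Separates (v : V) (S : Finset V) : Prop :=
  ¬S ⊆ T.descendants v ∧ ¬Disjoint S (T.descendants v)

noncomputable def separatingEdges (S : Finset V) : Finset V :=
  (univ.erase T.root).filter (T.Separates · S)

noncomputable def avoidingPairs (k : ℕ) : Finset (Finset V × V) :=
  (powersetCard k univ ×ˢ univ.erase T.root).filter (fun p => ¬T.Separates p.2 p.1)

/-- If the edge above `v` does not separate `S`, then `S` lies on one side of it; `join (S, v)` adds
the endpoint of that edge lying on the same side. -/
noncomputable def join (p : Finset V × V) : Finset V :=
  insert (if p.1 ⊆ T.descendants p.2 then T.parent p.2 else p.2) p.1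

variable {T} {k : ℕ} {U : Finset V}

@[simp]
lemma mem_descendants {a v : V} : v ∈ T.descendants a ↔ T.IsAncestor a v := by
  simp [descendants]

lemma descendants_root : T.descendants T.root = univ :=
  eq_univ_of_forall fun v => mem_descendants.mpr (root_isAncestor v)

lemma Separates.ne_root {v : V} {S : Finset V} (h : T.Separates v S) : v ≠ T.root :=
  fun hv => h.1 (by rw [hv, descendants_root]; exact subset_univ S)

lemma mem_separatingEdges {v : V} {S : Finset V} :
    v ∈ T.separatingEdges S ↔ T.Separates v S := by
  simpa [separatingEdges] using fun h => h.ne_root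

lemma mem_avoidingPairs {p : Finset V × V} :
    p ∈ T.avoidingPairs k ↔ #p.1 = k ∧ p.2 ≠ T.root ∧ ¬T.Separates p.2 p.1 := by
  simp [avoidingPairs, and_assoc]

lemma disjoint_descendants_of_not_separates {v : V} {S : Finset V} (h : ¬T.Separates v S)
    (hS : ¬S ⊆ T.descendants v) : Disjoint S (T.descendants v) :=
  not_not.mp fun hd => h ⟨hS, hd⟩

lemma join_mem_powersetCard {p : Finset V × V} (hp : p ∈ T.avoidingPairs k) :
    T.join p ∈ powersetCard (k + 1) univ := by
  obtain ⟨hcard, hroot, hsep⟩ := mem_avoidingPairs.mp hp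
  rw [mem_powersetCard, join, ← hcard]
  refine ⟨subset_univ _, card_insert_of_notMem ?_⟩
  split_ifs with hsub
  · exact fun h => not_isAncestor_parent hroot (mem_descendants.mp (hsub h))
  · exact disjoint_right.mp (disjoint_descendants_of_not_separates hsep hsub)
      (mem_descendants.mpr (.refl _))

lemma exists_child_of_forall_isAncestor {m : V} (hm : m ∈ U) (hU : 1 < #U)
    (hchain : ∀ u ∈ U, T.IsAncestor u m) :
    ∃ c, c ≠ T.root ∧ T.parent c ∈ U ∧ T.parent c ≠ m ∧
      U.erase (T.parent c) ⊆ T.descendants c := by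
  obtain ⟨l, hl, hlmin⟩ := exists_min_image U T.height ⟨m, hm⟩
  have hlm : l ≠ m := by
    rintro rfl
    obtain ⟨u, hu, hul⟩ := exists_mem_ne hU l
    rcases (hchain u hu).eq_or_height_lt with h | h
    exacts [hul h, (hlmin u hu).not_gt h]
  obtain ⟨c, hc, rfl, hcm⟩ := (hchain l hl).exists_child hlm
  refine ⟨c, hc, hl, hlm, fun u hu => mem_descendants.mpr ?_⟩
  obtain ⟨hul, hu⟩ := mem_erase.mp hu
  rcases (hchain u hu).total hcm with huc | hcu
  · rcases eq_or_ne u c with rfl | hne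
    · rfl
    rcases (huc.parent_of_ne hne).eq_or_height_lt with h | h
    exacts [absurd h hul, absurd (hlmin u hu) h.not_ge]
  · exact hcu

lemma mem_fiber_of_isLeaf (hk : 1 ≤ k) (hU : #U = k + 1) {w : V} (hw : w ∈ U)
    (hwr : w ≠ T.root) (hleaf : ∀ u ∈ U, T.IsAncestor w u → u = w) :
    (U.erase w, w) ∈ {p ∈ T.avoidingPairs k | T.join p = U} := by
  have hdisj : Disjoint (U.erase w) (T.descendants w) := by
    refine disjoint_left.mpr fun u hu hdesc => ?_
    exact (ne_of_mem_erase hu) (hleaf u (mem_of_mem_erase hu) (mem_descendants.mp hdesc))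
  have hsub : ¬U.erase w ⊆ T.descendants w := fun hsub => by
    have := card_erase_of_mem hw
    rw [(disjoint_self_iff_empty _).mp (hdisj.mono_right hsub), card_empty, hU] at this
    omega
  refine mem_filter.mpr ⟨mem_avoidingPairs.mpr ⟨?_, hwr, fun h => h.2 hdisj⟩, ?_⟩
  · simp [card_erase_of_mem hw, hU]
  · simp only [join, if_neg hsub, insert_erase hw]

lemma mem_fiber_of_child (hU : #U = k + 1) {c : V} (hc : c ≠ T.root) (hpc : T.parent c ∈ U)
    (hsub : U.erase (T.parent c) ⊆ T.descendants c) :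
    (U.erase (T.parent c), c) ∈ {p ∈ T.avoidingPairs k | T.join p = U} := by
  refine mem_filter.mpr ⟨mem_avoidingPairs.mpr ⟨?_, hc, fun h => h.1 hsub⟩, ?_⟩
  · simp [card_erase_of_mem hpc, hU]
  · simp only [join, if_pos hsub, insert_erase hpc]

/-- The two leaves: a highest vertex `m` of `U`, and either a highest vertex of `U` that is not an
ancestor of `m` or, when all of `U` lies on the path from the root to `m`, the lowest one. -/
lemma two_le_card_fiber (hk : 1 ≤ k) (hU : #U = k + 1) :
    2 ≤ #{p ∈ T.avoidingPairs k | T.join p = U} := by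
  obtain ⟨m, hm, hmax⟩ := exists_max_image U T.height (card_pos.mp (by omega))
  have hmleaf : ∀ u ∈ U, T.IsAncestor m u → u = m := fun u hu hmu =>
    hmu.eq_or_height_lt.elim Eq.symm fun h => absurd (hmax u hu) h.not_ge
  have hmr : m ≠ T.root := by
    obtain ⟨u, hu, hum⟩ := exists_mem_ne (by omega : 1 < #U) m
    exact fun h => hum (hmleaf u hu (h ▸ root_isAncestor u))
  refine one_lt_card.mpr ⟨_, mem_fiber_of_isLeaf hk hU hm hmr hmleaf, ?_⟩
  by_cases hchain : ∀ u ∈ U, T.IsAncestor u m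
  · obtain ⟨c, hc, hpc, hpcm, hsub⟩ := exists_child_of_forall_isAncestor hm (by omega) hchain
    refine ⟨_, mem_fiber_of_child hU hc hpc hsub, fun h => hpcm ?_⟩
    exact ((erase_inj U hm).mp (congrArg Prod.fst h)).symm
  · push Not at hchain
    obtain ⟨w, hw, hwm, hwr, hwleaf⟩ := exists_isLeaf_of_not_isAncestor hchain
    exact ⟨_, mem_fiber_of_isLeaf hk hU hw hwr hwleaf, fun h => hwm (congrArg Prod.snd h).symm⟩

lemma eq_of_insert_parent_eq (htotal : ∀ a b, T.IsAncestor a b ∨ T.IsAncestor b a)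
    {S S' : Finset V} {v v' : V} (hv : v ≠ T.root) (hv' : v' ≠ T.root)
    (hsub : S ⊆ T.descendants v) (hsub' : S' ⊆ T.descendants v')
    (h : insert (T.parent v) S = insert (T.parent v') S') : (S, v) = (S', v') := by
  have hpar : T.parent v = T.parent v' := by
    by_contra hne
    have h₁ : T.parent v' ∈ S :=
      mem_of_mem_insert_of_ne (h ▸ mem_insert_self _ S' : _ ∈ insert (T.parent v) S)
        (Ne.symm hne)
    have h₂ : T.parent v ∈ S' :=
      mem_of_mem_insert_of_ne (h ▸ mem_insert_self _ S : _ ∈ insert (T.parent v') S') hne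
    exact hne <| congrArg T.parent <| (mem_descendants.mp (hsub h₁)).of_parent.antisymm
      (mem_descendants.mp (hsub' h₂)).of_parent
  obtain rfl : v = v' := by
    by_contra hne
    rcases htotal v v' with h | h
    · exact not_isAncestor_parent hv (hpar ▸ h.parent_of_ne hne)
    · exact not_isAncestor_parent hv' (hpar.symm ▸ h.parent_of_ne (Ne.symm hne))
  have hS := congrArg (·.erase (T.parent v)) h
  simp only [erase_insert (fun h => not_isAncestor_parent hv (mem_descendants.mp (hsub h))),
    erase_insert (fun h => not_isAncestor_parent hv (mem_descendants.mp (hsub' h)))] at hS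
  rw [hS]

lemma eq_of_insert_eq (htotal : ∀ a b, T.IsAncestor a b ∨ T.IsAncestor b a)
    {S S' : Finset V} {v v' : V} (hdisj : Disjoint S (T.descendants v))
    (hdisj' : Disjoint S' (T.descendants v')) (h : insert v S = insert v' S') :
    (S, v) = (S', v') := by
  obtain rfl : v = v' := by
    by_contra hne
    have hv'S : v' ∈ S :=
      mem_of_mem_insert_of_ne (h ▸ mem_insert_self v' S' : v' ∈ insert v S) (Ne.symm hne)
    have hvS' : v ∈ S' :=
      mem_of_mem_insert_of_ne (h ▸ mem_insert_self v S : v ∈ insert v' S') hne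
    rcases htotal v v' with h | h
    · exact disjoint_left.mp hdisj hv'S (mem_descendants.mpr h)
    · exact disjoint_left.mp hdisj' hvS' (mem_descendants.mpr h)
  have hS := congrArg (·.erase v) h
  simp only [erase_insert (fun h => disjoint_left.mp hdisj h (mem_descendants.mpr (.refl v))),
    erase_insert (fun h => disjoint_left.mp hdisj' h (mem_descendants.mpr (.refl v)))] at hS
  rw [hS]

lemma eq_of_join_eq (htotal : ∀ a b, T.IsAncestor a b ∨ T.IsAncestor b a)
    {p q : Finset V × V} (hp : p ∈ T.avoidingPairs k) (hq : q ∈ T.avoidingPairs k)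
    (hjoin : T.join p = T.join q)
    (hside : p.1 ⊆ T.descendants p.2 ↔ q.1 ⊆ T.descendants q.2) :
    p = q := by
  obtain ⟨-, hv, hsep⟩ := mem_avoidingPairs.mp hp
  obtain ⟨-, hv', hsep'⟩ := mem_avoidingPairs.mp hq
  by_cases hsub : p.1 ⊆ T.descendants p.2
  · have hsub' := hside.mp hsub
    simp only [join, if_pos hsub, if_pos hsub'] at hjoin
    exact eq_of_insert_parent_eq htotal hv hv' hsub hsub' hjoin
  · have hsub' := mt hside.mpr hsub
    simp only [join, if_neg hsub, if_neg hsub'] at hjoin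
    exact eq_of_insert_eq htotal (disjoint_descendants_of_not_separates hsep hsub)
      (disjoint_descendants_of_not_separates hsep' hsub') hjoin

variable (T)

lemma sum_card_separatingEdges_add_card_avoidingPairs (k : ℕ) :
    ∑ S ∈ powersetCard k univ, #(T.separatingEdges S) + #(T.avoidingPairs k)
      = (Fintype.card V - 1) * (Fintype.card V).choose k := by
  have hpairs : #(T.avoidingPairs k)
      = ∑ S ∈ powersetCard k univ, #((univ.erase T.root).filter (¬T.Separates · S)) := by
    simp only [avoidingPairs, card_filter, sum_product]
  rw [hpairs, ← sum_add_distrib]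
  simp only [separatingEdges, card_filter_add_card_filter_not, sum_const, card_powersetCard,
    card_univ, card_erase_of_mem (mem_univ _), smul_eq_mul, mul_comm]

lemma card_avoidingPairs_eq_sum_card_fiber (k : ℕ) :
    #(T.avoidingPairs k)
      = ∑ U ∈ powersetCard (k + 1) univ, #{p ∈ T.avoidingPairs k | T.join p = U} :=
  card_eq_sum_card_fiberwise fun _ hp => join_mem_powersetCard hp

lemma two_mul_choose_le_card_avoidingPairs (hk : 1 ≤ k) :
    2 * (Fintype.card V).choose (k + 1) ≤ #(T.avoidingPairs k) := by
  rw [card_avoidingPairs_eq_sum_card_fiber, ← card_univ, ← card_powersetCard, mul_comm,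
    ← smul_eq_mul, ← sum_const]
  exact sum_le_sum fun U hU => two_le_card_fiber hk (mem_powersetCard.mp hU).2

/-- In a path, each fibre of `join` holds at most one pair with `S` below the edge and one with `S`
above it. -/
lemma card_avoidingPairs_le_of_total (htotal : ∀ a b, T.IsAncestor a b ∨ T.IsAncestor b a) :
    #(T.avoidingPairs k) ≤ 2 * (Fintype.card V).choose (k + 1) := by
  rw [card_avoidingPairs_eq_sum_card_fiber, ← card_univ, ← card_powersetCard, mul_comm,
    ← smul_eq_mul, ← sum_const]
  refine sum_le_sum fun U _ => ?_
  refine (card_le_card_of_injOn (fun p => decide (p.1 ⊆ T.descendants p.2))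
    (fun _ _ => mem_univ _) ?_).trans_eq Fintype.card_bool
  intro p hp q hq hpq
  simp only [mem_coe, mem_filter] at hp hq
  exact eq_of_join_eq htotal hp.1 hq.1 (hp.2.trans hq.2.symm) (by simpa using hpq)

theorem sum_card_separatingEdges_add_le (hk : 1 ≤ k) :
    ∑ S ∈ powersetCard k univ, #(T.separatingEdges S) + 2 * (Fintype.card V).choose (k + 1)
      ≤ (Fintype.card V - 1) * (Fintype.card V).choose k := by
  rw [← T.sum_card_separatingEdges_add_card_avoidingPairs k]
  exact Nat.add_le_add_left (T.two_mul_choose_le_card_avoidingPairs hk) _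

theorem sum_card_separatingEdges_add_eq_of_total (hk : 1 ≤ k)
    (htotal : ∀ a b, T.IsAncestor a b ∨ T.IsAncestor b a) :
    ∑ S ∈ powersetCard k univ, #(T.separatingEdges S) + 2 * (Fintype.card V).choose (k + 1)
      = (Fintype.card V - 1) * (Fintype.card V).choose k := by
  rw [← T.sum_card_separatingEdges_add_card_avoidingPairs k,
    le_antisymm (T.two_mul_choose_le_card_avoidingPairs hk)
      (T.card_avoidingPairs_le_of_total htotal)]

end Counting

section Graph

variable {V : Type*} {G : SimpleGraph V} (T : ParentTree V)

def IsLowestCommonAncestor (S : Finset V) (b : V) : Prop :=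
  (∀ t ∈ S, T.IsAncestor b t) ∧ ∀ c, (∀ t ∈ S, T.IsAncestor c t) → T.IsAncestor c b

def subtreeSubgraph (hG : ∀ v, v ≠ T.root → G.Adj (T.parent v) v) (b : V) (E : Set V)
    (hE : ∀ v ∈ E, v ≠ T.root ∧ (T.parent v ∈ E ∨ T.parent v = b)) : G.Subgraph where
  verts := insert b E
  Adj u v := ∃ w ∈ E, s(T.parent w, w) = s(u, v)
  adj_sub := by
    rintro u v ⟨w, hw, he⟩
    rw [← SimpleGraph.mem_edgeSet, ← he]
    exact hG w (hE w hw).1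
  edge_vert := by
    rintro u v ⟨w, hw, he⟩
    rcases Sym2.eq_iff.mp he with ⟨h, -⟩ | ⟨-, h⟩ <;> subst h
    · rcases (hE w hw).2 with h | h
      exacts [Set.mem_insert_of_mem _ h, h ▸ Set.mem_insert _ _]
    · exact Set.mem_insert_of_mem _ hw
  symm := ⟨fun _ _ ⟨w, hw, he⟩ => ⟨w, hw, he.trans Sym2.eq_swap⟩⟩

variable {T}

lemma subtreeSubgraph_connected (hG : ∀ v, v ≠ T.root → G.Adj (T.parent v) v) {b : V}
    {E : Set V} (hE : ∀ v ∈ E, v ≠ T.root ∧ (T.parent v ∈ E ∨ T.parent v = b)) :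
    (T.subtreeSubgraph hG b E hE).Connected := by
  set H := T.subtreeSubgraph hG b E hE
  have hwalk : ∀ v ∈ H.verts, ∃ p : G.Walk b v, p.toSubgraph ≤ H := by
    intro v hv
    induction hh : T.height v using Nat.strong_induction_on generalizing v with
    | _ n ih =>
      rcases (hv : v ∈ insert b E) with rfl | hv
      · exact ⟨.nil, by
          rw [SimpleGraph.Walk.toSubgraph, SimpleGraph.singletonSubgraph_le_iff]
          exact Set.mem_insert v E⟩
      · have hpv : T.parent v ∈ insert b E :=
          (hE v hv).2.elim (Set.mem_insert_of_mem _) (fun h => h ▸ Set.mem_insert _ _)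
        obtain ⟨q, hq⟩ := ih _ (hh ▸ T.height_parent_lt v (hE v hv).1) _ hpv rfl
        refine ⟨q.append (.cons (hG v (hE v hv).1) .nil), ?_⟩
        rw [SimpleGraph.Walk.toSubgraph_append,
          SimpleGraph.Walk.toSubgraph_cons_nil_eq_subgraphOfAdj]
        exact sup_le hq (SimpleGraph.subgraphOfAdj_le_of_adj H ⟨v, hv, rfl⟩)
  refine H.connected_iff_forall_exists_walk_subgraph.mpr ⟨⟨b, Set.mem_insert b E⟩, ?_⟩
  intro u v hu hv
  obtain ⟨p, hp⟩ := hwalk u hu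
  obtain ⟨q, hq⟩ := hwalk v hv
  refine ⟨p.reverse.append q, ?_⟩
  rw [SimpleGraph.Walk.toSubgraph_append, SimpleGraph.Walk.toSubgraph_reverse]
  exact sup_le hp hq

lemma edgeSet_subtreeSubgraph_subset (hG : ∀ v, v ≠ T.root → G.Adj (T.parent v) v) {b : V}
    {E : Set V} (hE : ∀ v ∈ E, v ≠ T.root ∧ (T.parent v ∈ E ∨ T.parent v = b)) :
    (T.subtreeSubgraph hG b E hE).edgeSet ⊆ (fun w => s(T.parent w, w)) '' E := by
  intro e he
  induction e using Sym2.ind with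
  | _ u v =>
    obtain ⟨w, hw, hwe⟩ : ∃ w ∈ E, s(T.parent w, w) = s(u, v) := he
    exact ⟨w, hw, hwe⟩

variable [Fintype V] {S : Finset V}

lemma exists_isLowestCommonAncestor (hS : S.Nonempty) : ∃ b, T.IsLowestCommonAncestor S b := by
  obtain ⟨b, hb, hbmax⟩ := exists_max_image (univ.filter fun c => ∀ t ∈ S, T.IsAncestor c t)
    T.height ⟨T.root, mem_filter.mpr ⟨mem_univ _, fun t _ => root_isAncestor t⟩⟩
  refine ⟨b, (mem_filter.mp hb).2, fun c hc => ?_⟩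
  obtain ⟨t, ht⟩ := hS
  rcases (hc t ht).total ((mem_filter.mp hb).2 t ht) with hcb | hbc
  · exact hcb
  · rcases hbc.eq_or_height_lt with rfl | hlt
    · rfl
    · exact absurd (hbmax c (mem_filter.mpr ⟨mem_univ _, hc⟩)) hlt.not_ge

lemma mem_separatingEdges_of_mem {b : V} (hb : T.IsLowestCommonAncestor S b) {t : V}
    (ht : t ∈ S) (htb : t ≠ b) : t ∈ T.separatingEdges S := by
  have hnsub : ¬S ⊆ T.descendants t := fun hsub =>
    htb ((hb.2 t fun u hu => mem_descendants.mp (hsub hu)).antisymm (hb.1 t ht))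
  exact mem_separatingEdges.mpr
    ⟨hnsub, not_disjoint_iff.mpr ⟨t, ht, mem_descendants.mpr (.refl t)⟩⟩

lemma parent_mem_separatingEdges_or_eq {b : V} (hb : T.IsLowestCommonAncestor S b) {v : V}
    (hv : v ∈ T.separatingEdges S) : T.parent v ∈ T.separatingEdges S ∨ T.parent v = b := by
  obtain ⟨hnsub, hndisj⟩ := mem_separatingEdges.mp hv
  obtain ⟨t, htS, htv⟩ := not_disjoint_iff.mp hndisj
  by_cases hsub : S ⊆ T.descendants (T.parent v)
  · right
    have hbv : T.IsAncestor b v := by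
      rcases (hb.1 t htS).total (mem_descendants.mp htv) with h | h
      · exact h
      · exact absurd (fun u hu => mem_descendants.mpr (h.trans (hb.1 u hu))) hnsub
    have hbv' : b ≠ v := fun h => hnsub fun u hu => mem_descendants.mpr (h ▸ hb.1 u hu)
    exact (hb.2 _ fun u hu => mem_descendants.mp (hsub hu)).antisymm (hbv.parent_of_ne hbv')
  · left
    exact mem_separatingEdges.mpr ⟨hsub, not_disjoint_iff.mpr
      ⟨t, htS, mem_descendants.mpr ((isAncestor_parent v).trans (mem_descendants.mp htv))⟩⟩

lemma exists_connected_subgraph_ncard_le (hG : ∀ v, v ≠ T.root → G.Adj (T.parent v) v)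
    (hS : S.Nonempty) : ∃ H : G.Subgraph, H.Connected ∧ ↑S ⊆ H.verts ∧
      H.edgeSet.ncard ≤ #(T.separatingEdges S) := by
  obtain ⟨b, hb⟩ := exists_isLowestCommonAncestor (T := T) hS
  have hE : ∀ v ∈ (T.separatingEdges S : Set V),
      v ≠ T.root ∧ (T.parent v ∈ (T.separatingEdges S : Set V) ∨ T.parent v = b) :=
    fun v hv => ⟨(mem_separatingEdges.mp hv).ne_root, parent_mem_separatingEdges_or_eq hb hv⟩
  refine ⟨T.subtreeSubgraph hG b _ hE, subtreeSubgraph_connected hG hE, fun t ht => ?_, ?_⟩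
  · by_cases htb : t = b
    · exact Set.mem_insert_iff.mpr (Or.inl htb)
    · exact Set.mem_insert_of_mem _ (mem_separatingEdges_of_mem hb ht htb)
  · calc _ ≤ ((fun w => s(T.parent w, w)) '' (T.separatingEdges S : Set V)).ncard :=
          Set.ncard_le_ncard (edgeSet_subtreeSubgraph_subset hG hE) (Set.toFinite _)
      _ ≤ #(T.separatingEdges S) :=
          (Set.ncard_image_le (Set.toFinite _)).trans_eq (Set.ncard_coe_finset _)

theorem steinerDist_le_card_separatingEdges (hG : ∀ v, v ≠ T.root → G.Adj (T.parent v) v)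
    (hS : S.Nonempty) : steinerDist G S ≤ #(T.separatingEdges S) := by
  obtain ⟨H, hH, hSH, hcard⟩ := exists_connected_subgraph_ncard_le hG hS
  calc steinerDist G S ≤ H.edgeSet.ncard := Nat.sInf_le ⟨H, hH, hSH, rfl⟩
    _ ≤ #(T.separatingEdges S) := hcard

/-- A walk in `H` from a descendant of `v` in `S` to another vertex of `S` must leave the
descendants of `v`, and if all edges of `G` are tree edges it can only do so through the edge
above `v`. -/
lemma parentEdge_mem_edgeSet_of_separates
    (hG : ∀ u v, G.Adj u v → ∃ w, w ≠ T.root ∧ s(u, v) = s(T.parent w, w))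
    {H : G.Subgraph} (hH : H.Connected) (hSH : ↑S ⊆ H.verts) {v : V} (hv : T.Separates v S) :
    s(T.parent v, v) ∈ H.edgeSet := by
  obtain ⟨t, htS, htv⟩ := not_disjoint_iff.mp hv.2
  obtain ⟨t', ht'S, ht'v⟩ := not_subset.mp hv.1
  obtain ⟨p, hp⟩ := (H.connected_iff_forall_exists_walk_subgraph.mp hH).2 (hSH htS) (hSH ht'S)
  obtain ⟨d, hd, hin, hout⟩ := p.exists_boundary_dart {x | T.IsAncestor v x}
    (mem_descendants.mp htv) (mt mem_descendants.mpr ht'v)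
  obtain ⟨w, hw, hdw⟩ := hG _ _ d.adj
  have hwv : w = v := by
    rcases Sym2.eq_iff.mp hdw with ⟨h₁, h₂⟩ | ⟨h₁, h₂⟩
    · exact absurd (h₂ ▸ (h₁ ▸ hin : T.IsAncestor v (T.parent w)).of_parent) hout
    · by_contra hne
      exact hout (h₂ ▸ (h₁ ▸ hin : T.IsAncestor v w).parent_of_ne (Ne.symm hne))
  subst hwv
  rw [← hdw]
  exact SimpleGraph.Subgraph.edgeSet_mono hp (p.mem_edges_toSubgraph.mpr (List.mem_map_of_mem hd))

lemma card_separatingEdges_le_ncard_edgeSet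
    (hG : ∀ u v, G.Adj u v → ∃ w, w ≠ T.root ∧ s(u, v) = s(T.parent w, w))
    {H : G.Subgraph} (hH : H.Connected) (hSH : ↑S ⊆ H.verts) :
    #(T.separatingEdges S) ≤ H.edgeSet.ncard := by
  rw [← card_image_of_injOn (injOn_parentEdge.mono fun v hv =>
    (mem_separatingEdges.mp hv).ne_root), ← Set.ncard_coe_finset]
  refine Set.ncard_le_ncard ?_ (Set.toFinite _)
  intro e he
  obtain ⟨v, hv, rfl⟩ := mem_image.mp he
  exact parentEdge_mem_edgeSet_of_separates hG hH hSH (mem_separatingEdges.mp hv)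

theorem steinerDist_eq_card_separatingEdges (hadj : ∀ v, v ≠ T.root → G.Adj (T.parent v) v)
    (hedge : ∀ u v, G.Adj u v → ∃ w, w ≠ T.root ∧ s(u, v) = s(T.parent w, w))
    (hS : S.Nonempty) : steinerDist G S = #(T.separatingEdges S) := by
  obtain ⟨H, hH, hSH, -⟩ := exists_connected_subgraph_ncard_le hadj hS
  refine le_antisymm (steinerDist_le_card_separatingEdges hadj hS) ?_
  refine le_csInf ⟨_, H, hH, hSH, rfl⟩ fun _ ⟨H', hH', hSH', hm⟩ => ?_
  exact hm ▸ card_separatingEdges_le_ncard_edgeSet hedge hH' hSH'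

end Graph

section Path

variable {V : Type*} {G : SimpleGraph V} {n : ℕ}

def ofEquivFin (e : V ≃ Fin n) (hn : 0 < n) : ParentTree V where
  root := e.symm ⟨0, hn⟩
  parent v := e.symm ⟨e v - 1, by omega⟩
  height v := e v
  parent_root := by simp
  height_parent_lt v hv := by
    have : (e v : ℕ) ≠ 0 := fun h => hv (e.symm_apply_eq.mpr (Fin.ext h.symm)).symm
    simp only [Equiv.apply_symm_apply]
    omega

lemma ofEquivFin_isAncestor_iff (e : V ≃ Fin n) (hn : 0 < n) {a b : V} :
    (ofEquivFin e hn).IsAncestor a b ↔ e a ≤ e b := by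
  refine ⟨IsAncestor.height_le, fun hab => ?_⟩
  obtain ⟨d, hd⟩ := Nat.exists_eq_add_of_le (Fin.le_def.mp hab)
  clear hab
  induction d generalizing b with
  | zero =>
    obtain rfl : b = a := e.injective (Fin.ext hd)
    rfl
  | succ d ih => exact IsAncestor.of_parent (ih (by simp [ofEquivFin, hd]))

lemma ofEquivFin_isAncestor_total (e : V ≃ Fin n) (hn : 0 < n) (a b : V) :
    (ofEquivFin e hn).IsAncestor a b ∨ (ofEquivFin e hn).IsAncestor b a := by
  simp only [ofEquivFin_isAncestor_iff]
  exact le_total _ _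

lemma ofEquivFin_parent_val (e : V ≃ Fin n) (hn : 0 < n) (v : V) :
    (e ((ofEquivFin e hn).parent v) : ℕ) = e v - 1 := by
  simp [ofEquivFin]

lemma ofEquivFin_ne_root_iff (e : V ≃ Fin n) (hn : 0 < n) {v : V} :
    v ≠ (ofEquivFin e hn).root ↔ 0 < (e v : ℕ) := by
  simp [ofEquivFin, Equiv.eq_symm_apply, Fin.ext_iff, Nat.pos_iff_ne_zero]

lemma adj_parent_of_iso_pathGraph (φ : G ≃g SimpleGraph.pathGraph n) (hn : 0 < n) (v : V)
    (hv : v ≠ (ofEquivFin φ.toEquiv hn).root) :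
    G.Adj ((ofEquivFin φ.toEquiv hn).parent v) v := by
  rw [← φ.map_adj_iff, SimpleGraph.pathGraph_adj]
  have := ofEquivFin_parent_val φ.toEquiv hn v
  rw [ofEquivFin_ne_root_iff] at hv
  simp only [RelIso.coe_fn_toEquiv] at this hv
  omega

lemma exists_eq_parentEdge_of_iso_pathGraph (φ : G ≃g SimpleGraph.pathGraph n) (hn : 0 < n)
    (u v : V) (huv : G.Adj u v) :
    ∃ w, w ≠ (ofEquivFin φ.toEquiv hn).root ∧
      s(u, v) = s((ofEquivFin φ.toEquiv hn).parent w, w) := by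
  have hpar := ofEquivFin_parent_val φ.toEquiv hn
  simp only [ofEquivFin_ne_root_iff, RelIso.coe_fn_toEquiv] at hpar ⊢
  rcases SimpleGraph.pathGraph_adj.mp (φ.map_adj_iff.mpr huv) with h | h
  · refine ⟨v, by omega, congrArg₂ _ (φ.injective (Fin.ext ?_)) rfl⟩
    rw [hpar]; omega
  · refine ⟨u, by omega, Sym2.eq_swap.trans (congrArg₂ _ (φ.injective (Fin.ext ?_)) rfl)⟩
    rw [hpar]; omega

end Path

end ParentTree

lemma SimpleGraph.Connected.exists_adj_dist_lt {V : Type*} {G : SimpleGraph V}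
    (hG : G.Connected) {u v : V} (h : v ≠ u) : ∃ w, G.Adj v w ∧ G.dist w u < G.dist v u := by
  obtain ⟨p, hp⟩ := hG.exists_walk_length_eq_dist v u
  cases p with
  | nil => exact absurd rfl h
  | cons hadj q =>
    refine ⟨_, hadj, (SimpleGraph.dist_le q).trans_lt ?_⟩
    rw [← hp, SimpleGraph.Walk.length_cons]
    exact Nat.lt_succ_self _

lemma SimpleGraph.Connected.exists_parentTree {V : Type*} {G : SimpleGraph V}
    (hG : G.Connected) :
    ∃ T : ParentTree V, ∀ v, v ≠ T.root → G.Adj (T.parent v) v := by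
  obtain ⟨r⟩ := hG.nonempty
  choose f hf using fun v (h : v ≠ r) => hG.exists_adj_dist_lt h
  refine ⟨⟨r, fun v => if h : v = r then r else f v h, fun v => G.dist v r, dif_pos rfl,
    fun v hv => ?_⟩, fun v hv => ?_⟩
  · simpa only [dif_neg hv] using (hf v hv).2
  · simpa only [dif_neg hv] using (hf v hv).1.symm

lemma Nat.succ_mul_sub_one_mul_choose {n k : ℕ} (hk : 1 ≤ k) :
    (k + 1) * ((n - 1) * n.choose k)
      = (k - 1) * (n + 1) * n.choose k + (k + 1) * (2 * n.choose (k + 1)) := by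
  rcases le_or_gt k n with hkn | hnk
  · have hcs := Nat.choose_succ_right_eq n k
    obtain ⟨k, rfl⟩ := Nat.exists_eq_add_of_le hk
    obtain ⟨d, rfl⟩ := Nat.exists_eq_add_of_le hkn
    simp only [Nat.add_sub_cancel_left, show 1 + k + d - 1 = k + d by omega] at hcs ⊢
    linear_combination 2 * hcs.symm
  · simp [Nat.choose_eq_zero_of_lt hnk, Nat.choose_eq_zero_of_lt (hnk.trans k.lt_succ_self)]

lemma Nat.mul_le_of_add_two_mul_choose_le {n k A : ℕ} (hk : 1 ≤ k)
    (h : A + 2 * n.choose (k + 1) ≤ (n - 1) * n.choose k) :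
    (k + 1) * A ≤ (k - 1) * (n + 1) * n.choose k := by
  have := Nat.mul_le_mul_left (k + 1) h
  rw [mul_add, Nat.succ_mul_sub_one_mul_choose hk] at this
  omega

lemma Nat.mul_eq_of_add_two_mul_choose_eq {n k A : ℕ} (hk : 1 ≤ k)
    (h : A + 2 * n.choose (k + 1) = (n - 1) * n.choose k) :
    (k + 1) * A = (k - 1) * (n + 1) * n.choose k := by
  have := congrArg (HMul.hMul (k + 1)) h
  rw [mul_add, Nat.succ_mul_sub_one_mul_choose hk] at this
  omega

theorem steiner_wiener_upper_bound_general {V : Type*} [Fintype V] (G : SimpleGraph V)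
    (hG : G.Connected) (k : ℕ) (hk2 : 2 ≤ k) :
    (k + 1) * swk k G ≤ (k - 1) * (Fintype.card V + 1) * Nat.choose (Fintype.card V) k ∧
    (Nonempty (G ≃g SimpleGraph.pathGraph (Fintype.card V)) →
      (k + 1) * swk k G = (k - 1) * (Fintype.card V + 1) * Nat.choose (Fintype.card V) k) := by
  have hk : 1 ≤ k := by omega
  have hne : ∀ S ∈ powersetCard k (univ : Finset V), S.Nonempty := fun S hS =>
    card_pos.mp ((mem_powersetCard.mp hS).2 ▸ hk)
  constructor
  · obtain ⟨T, hT⟩ := hG.exists_parentTree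
    have hsum : swk k G ≤ ∑ S ∈ powersetCard k univ, #(T.separatingEdges S) :=
      sum_le_sum fun S hS => ParentTree.steinerDist_le_card_separatingEdges hT (hne S hS)
    exact (Nat.mul_le_mul_left _ hsum).trans
      (Nat.mul_le_of_add_two_mul_choose_le hk (T.sum_card_separatingEdges_add_le hk))
  · rintro ⟨φ⟩
    have hn : 0 < Fintype.card V := Fintype.card_pos_iff.mpr hG.nonempty
    have hsum : swk k G = ∑ S ∈ powersetCard k univ,
        #((ParentTree.ofEquivFin φ.toEquiv hn).separatingEdges S) :=
      sum_congr rfl fun S hS => ParentTree.steinerDist_eq_card_separatingEdges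
        (ParentTree.adj_parent_of_iso_pathGraph φ hn)
        (ParentTree.exists_eq_parentEdge_of_iso_pathGraph φ hn) (hne S hS)
    rw [hsum]
    exact Nat.mul_eq_of_add_two_mul_choose_eq hk
      ((ParentTree.ofEquivFin φ.toEquiv hn).sum_card_separatingEdges_add_eq_of_total hk
        (ParentTree.ofEquivFin_isAncestor_total φ.toEquiv hn))

/-- If G is connected of order n and 2 ≤ k ≤ n then
SW_k(G) ≤ ((k-1)(n+1)/(k+1))·C(n,k), with equality when G is a path.
(Stated multiplied through by (k+1).) -/
theorem steiner_wiener_upper_bound {V : Type*} [Fintype V] (G : SimpleGraph V)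
    (hG : G.Connected) (k : ℕ) (hk2 : 2 ≤ k) (hkn : k ≤ Fintype.card V) :
    (k + 1) * swk k G ≤ (k - 1) * (Fintype.card V + 1) * Nat.choose (Fintype.card V) k ∧
    (Nonempty (G ≃g SimpleGraph.pathGraph (Fintype.card V)) →
      (k + 1) * swk k G = (k - 1) * (Fintype.card V + 1) * Nat.choose (Fintype.card V) k) :=
  steiner_wiener_upper_bound_general G hG k hk2
end

section
/- Let T be a path with vertices v_1,…,v_n in order and c : V(T) → ℕ a weight function with c(v) ≥ C ≥ 1 for all v. Let P be the path whose vertices are the copies v_i^r (1 ≤ r ≤ c(v_i)) arranged in the order v_1^1,…,v_1^{c(v_1)}, v_2^1,…, v_n^{c(v_n)}. Then for any two copies x, y one has d_T(x*, y*) ≤ (d_P(x,y) − 1)/C + 1, where x*, y* are the original vertices of x and y. -/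
/-!
If `x`, `y` are copies of `v_a`, `v_b` with `a < b`, then the interval `(x, y]` of `P` contains
all `c(v_i) ≥ C` copies of each of the `b - a - 1` vertices strictly between `v_a` and `v_b`,
and `y` itself, so `d_P(x, y) ≥ C (b - a - 1) + 1`, while `d_T(v_a, v_b) = b - a`.
-/

open scoped Classical
open Finset

namespace SimpleGraph

variable {n : ℕ}

lemma pathGraph_sub_le_length {a b : Fin n} (w : (pathGraph n).Walk a b) :
    (b : ℕ) - a ≤ w.length := by
  induction w with
  | nil => simp
  | cons h _ ih =>
    rw [pathGraph_adj] at h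
    rw [Walk.length_cons]
    omega

lemma pathGraph_exists_walk_length_eq_sub {a b : Fin n} (hab : a ≤ b) :
    ∃ w : (pathGraph n).Walk a b, w.length = b - a := by
  obtain ⟨k, hk⟩ := Nat.exists_eq_add_of_le (Fin.le_def.mp hab)
  induction k generalizing a with
  | zero =>
    obtain rfl : b = a := Fin.ext hk
    exact ⟨Walk.nil, by simp⟩
  | succ k ih =>
    let a' : Fin n := ⟨a + 1, by omega⟩
    have hadj : (pathGraph n).Adj a a' := pathGraph_adj.mpr (Or.inl rfl)
    obtain ⟨w, hw⟩ := ih (a := a') (Fin.le_def.mpr (by simp [a']; omega)) (by simp [a']; omega)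
    exact ⟨Walk.cons hadj w, by simp [hw, a']; omega⟩

lemma pathGraph_dist_of_le {a b : Fin n} (hab : a ≤ b) :
    (pathGraph n).dist a b = b - a := by
  obtain ⟨w, hw⟩ := (pathGraph_preconnected n a b).exists_walk_length_eq_dist
  obtain ⟨w', hw'⟩ := pathGraph_exists_walk_length_eq_sub hab
  exact le_antisymm (hw' ▸ dist_le w') (hw ▸ pathGraph_sub_le_length w)

end SimpleGraph

section LexEnumeration

variable {n N : ℕ} {c : Fin n → ℕ} (e : (Σ i : Fin n, Fin (c i)) ≃ Fin N)

lemma sum_Ioo_lt_sub_of_lex (he : ∀ x y : Σ i : Fin n, Fin (c i),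
      e x < e y ↔ (x.1 < y.1 ∨ (x.1 = y.1 ∧ (x.2 : ℕ) < (y.2 : ℕ))))
    {x y : Σ i : Fin n, Fin (c i)} (hxy : x.1 < y.1) :
    ∑ i ∈ Ioo x.1 y.1, c i < (e y : ℕ) - e x := by
  set between := (Ioo x.1 y.1).sigma fun i => (univ : Finset (Fin (c i)))
  have hy : y ∉ between := by simp [between]
  have hmaps : (Finset.cons y between hy).image e ⊆ Ioc (e x) (e y) := by
    simp only [image_subset_iff, mem_cons, mem_Ioc, forall_eq_or_imp, mem_sigma, mem_Ioo, between]
    refine ⟨⟨(he x y).mpr (Or.inl hxy), le_rfl⟩, fun z ⟨⟨hxz, hzy⟩, _⟩ => ?_⟩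
    exact ⟨(he x z).mpr (Or.inl hxz), ((he z y).mpr (Or.inl hzy)).le⟩
  have hcard := card_le_card hmaps
  rw [card_image_of_injective _ e.injective, card_cons, card_sigma, Fin.card_Ioc] at hcard
  simp only [card_univ, Fintype.card_fin] at hcard
  omega

lemma mul_pathGraph_dist_add_one_le_of_lex {C : ℕ} (hC : 1 ≤ C) (hc : ∀ i, C ≤ c i)
    (he : ∀ x y : Σ i : Fin n, Fin (c i),
      e x < e y ↔ (x.1 < y.1 ∨ (x.1 = y.1 ∧ (x.2 : ℕ) < (y.2 : ℕ))))
    {x y : Σ i : Fin n, Fin (c i)} (hxy : x.1 ≤ y.1) :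
    C * (SimpleGraph.pathGraph n).dist x.1 y.1 + 1 ≤
      (SimpleGraph.pathGraph N).dist (e x) (e y) + C := by
  rcases hxy.eq_or_lt with h | h
  · rw [h, SimpleGraph.dist_self]
    omega
  have hgap := sum_Ioo_lt_sub_of_lex e he h
  have hsum : C * (y.1 - x.1 - 1) ≤ ∑ i ∈ Ioo x.1 y.1, c i := by
    simpa [Fin.card_Ioo, mul_comm] using card_nsmul_le_sum (Ioo x.1 y.1) c C fun i _ => hc i
  have hsplit : C * (y.1 - x.1) = C * (y.1 - x.1 - 1) + C := by
    rw [← mul_add_one]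
    congr
    omega
  rw [SimpleGraph.pathGraph_dist_of_le h.le,
    SimpleGraph.pathGraph_dist_of_le ((he x y).mpr (Or.inl h)).le]
  omega

end LexEnumeration

/-- if T is a path v_1,…,v_n with weights c(v) ≥ C ≥ 1, and P is the path
on the copies of the vertices of T arranged in the induced (lexicographic) order, then
for any two copies x, y we have d_T(x*,y*) ≤ (d_P(x,y) − 1)/C + 1, i.e.
C·d_T(x*,y*) ≤ d_P(x,y) + C − 1. -/
theorem path_contraction_distance (n : ℕ) (c : Fin n → ℕ) (C : ℕ) (hC : 1 ≤ C)
    (hc : ∀ i, C ≤ c i)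
    (e : (Σ i : Fin n, Fin (c i)) ≃ Fin (∑ i, c i))
    (he : ∀ x y : Σ i : Fin n, Fin (c i),
      e x < e y ↔ (x.1 < y.1 ∨ (x.1 = y.1 ∧ (x.2 : ℕ) < (y.2 : ℕ))))
    (x y : Σ i : Fin n, Fin (c i)) :
    (C : ℤ) * (SimpleGraph.pathGraph n).dist x.1 y.1 ≤
      ((SimpleGraph.pathGraph (∑ i, c i)).dist (e x) (e y) : ℤ) + C - 1 := by
  rcases le_total x.1 y.1 with h | h
  · have := mul_pathGraph_dist_add_one_le_of_lex e hC hc he h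
    zify at this
    linarith
  · have := mul_pathGraph_dist_add_one_le_of_lex e hC hc he h
    rw [SimpleGraph.dist_comm, SimpleGraph.dist_comm (u := e y)] at this
    zify at this
    linarith
end

section
/- Let T be a tree and L its line graph. Let S_V be a set of vertices of T and S_E a set of edges of T such that every vertex of S_V is incident with some edge of S_E. Then d_T(S_V) ≤ d_L(S_E) + 1. -/
open scoped Classical
open Finset

/-! The edges of a connected subgraph `H` of the line graph span a connected subgraph of `T` with
`|V(H)|` edges, and it covers `S_V` as soon as `V(H) ⊇ S_E`; since `H` is connected,
`|V(H)| ≤ |E(H)| + 1`. Taking for `H` a subgraph that realises `d_L(S_E)` gives the bound. -/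

namespace SimpleGraph

variable {V : Type*} {G : SimpleGraph V}

lemma steinerDist_le {S : Finset V} {H : G.Subgraph} (hH : H.Connected) (hS : ↑S ⊆ H.verts) :
    steinerDist G S ≤ H.edgeSet.ncard :=
  Nat.sInf_le ⟨H, hH, hS, rfl⟩

lemma steinerDist_empty [Nonempty V] : steinerDist G ∅ = 0 := by
  obtain ⟨v⟩ := ‹Nonempty V›
  simpa using steinerDist_le (Subgraph.singletonSubgraph_connected (G := G) (v := v))
    (by simp)

lemma Connected.exists_subgraph_steinerDist (hG : G.Connected) (S : Finset V) :
    ∃ H : G.Subgraph, H.Connected ∧ ↑S ⊆ H.verts ∧ H.edgeSet.ncard = steinerDist G S := by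
  have htop : (⊤ : G.Subgraph).Connected :=
    Subgraph.connected_iff'.2 (Subgraph.topIso.connected_iff.2 hG)
  have hne : {m | ∃ H : G.Subgraph, H.Connected ∧ ↑S ⊆ H.verts ∧ H.edgeSet.ncard = m}.Nonempty :=
    ⟨_, ⊤, htop, Set.subset_univ _, rfl⟩
  exact Nat.sInf_mem hne

lemma Subgraph.Connected.ncard_verts_le_ncard_edgeSet_add_one {H : G.Subgraph}
    (hH : H.Connected) : H.verts.ncard ≤ H.edgeSet.ncard + 1 := by
  have := hH.coe.card_vert_le_card_edgeSet_add_one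
  rwa [Nat.card_coe_set_eq, Nat.card_coe_set_eq,
    ← Set.ncard_image_of_injective _ (Sym2.map.injective Subtype.val_injective),
    H.image_coe_edgeSet_coe] at this

lemma lineGraph_reachable_of_mem {e f : G.edgeSet} {v : V} (he : v ∈ (e : Sym2 V))
    (hf : v ∈ (f : Sym2 V)) : G.lineGraph.Reachable e f := by
  by_cases h : e = f
  · exact h ▸ Reachable.refl e
  · exact (lineGraph_adj_iff_exists.2 ⟨h, v, he, hf⟩).reachable

lemma Walk.lineGraph_reachable {u v : V} (p : G.Walk u v) {e f : G.edgeSet}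
    (he : u ∈ (e : Sym2 V)) (hf : v ∈ (f : Sym2 V)) : G.lineGraph.Reachable e f := by
  induction p generalizing e with
  | nil => exact lineGraph_reachable_of_mem he hf
  | @cons u w _ huw _ ih =>
    exact (lineGraph_reachable_of_mem (f := ⟨s(u, w), huw⟩) he (Sym2.mem_mk_left u w)).trans
      (ih (Sym2.mem_mk_right u w) hf)

lemma Preconnected.lineGraph (hG : G.Preconnected) : G.lineGraph.Preconnected := by
  intro e f
  obtain ⟨p⟩ := hG (e : Sym2 V).out.1 (f : Sym2 V).out.1
  exact p.lineGraph_reachable (Sym2.out_fst_mem _) (Sym2.out_fst_mem _)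

lemma Connected.lineGraph (hG : G.Connected) [Nonempty G.edgeSet] : G.lineGraph.Connected :=
  ⟨hG.preconnected.lineGraph⟩

section edgeInducedSubgraph

variable (s : Set G.edgeSet)

variable (G) in
def edgeInducedSubgraph : G.Subgraph where
  verts := {v | ∃ e ∈ s, v ∈ (e : Sym2 V)}
  Adj a b := s(a, b) ∈ Subtype.val '' s
  adj_sub := by
    rintro a b ⟨e, -, he⟩
    exact G.mem_edgeSet.1 (he ▸ e.2)
  edge_vert := by
    rintro a b ⟨e, hs, he⟩
    exact ⟨e, hs, he ▸ Sym2.mem_mk_left a b⟩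
  symm := ⟨fun a b => by rw [Sym2.eq_swap]; exact id⟩

lemma edgeSet_edgeInducedSubgraph : (G.edgeInducedSubgraph s).edgeSet = Subtype.val '' s :=
  Set.ext <| Sym2.ind fun _ _ => Subgraph.mem_edgeSet

lemma ncard_edgeSet_edgeInducedSubgraph : (G.edgeInducedSubgraph s).edgeSet.ncard = s.ncard := by
  rw [edgeSet_edgeInducedSubgraph, Set.ncard_image_of_injective _ Subtype.val_injective]

variable {s}

lemma edgeInducedSubgraph_reachable_of_mem {e : G.edgeSet} (he : e ∈ s) {a b : V}
    (ha : a ∈ (e : Sym2 V)) (hb : b ∈ (e : Sym2 V)) :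
    (G.edgeInducedSubgraph s).coe.Reachable ⟨a, e, he, ha⟩ ⟨b, e, he, hb⟩ := by
  by_cases hab : a = b
  · subst hab
    rfl
  · exact Adj.reachable (G := (G.edgeInducedSubgraph s).coe)
      ⟨e, he, (Sym2.mem_and_mem_iff hab).1 ⟨ha, hb⟩⟩

lemma Walk.edgeInducedSubgraph_reachable {H : G.lineGraph.Subgraph} {e f : H.verts}
    (p : H.coe.Walk e f) {a b : V} (ha : a ∈ ((e : G.edgeSet) : Sym2 V))
    (hb : b ∈ ((f : G.edgeSet) : Sym2 V)) :
    (G.edgeInducedSubgraph H.verts).coe.Reachable ⟨a, e, e.2, ha⟩ ⟨b, f, f.2, hb⟩ := by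
  induction p generalizing a with
  | nil => exact edgeInducedSubgraph_reachable_of_mem (Subtype.prop _) ha hb
  | @cons e e' f hadj _ ih =>
    obtain ⟨-, w, hwe, hwe'⟩ := lineGraph_adj_iff_exists.1 (H.adj_sub hadj)
    exact (edgeInducedSubgraph_reachable_of_mem e.2 ha hwe).trans (ih hwe' hb)

lemma Subgraph.Connected.edgeInducedSubgraph {H : G.lineGraph.Subgraph} (hH : H.Connected) :
    (G.edgeInducedSubgraph H.verts).Connected := by
  refine Subgraph.connected_iff.2 ⟨Subgraph.preconnected_iff.2 ?_, ?_⟩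
  · rintro ⟨a, e, he, ha⟩ ⟨b, f, hf, hb⟩
    obtain ⟨p⟩ := hH.preconnected.coe ⟨e, he⟩ ⟨f, hf⟩
    exact p.edgeInducedSubgraph_reachable ha hb
  · obtain ⟨e, he⟩ := hH.nonempty
    exact ⟨_, e, he, Sym2.out_fst_mem _⟩

end edgeInducedSubgraph

lemma steinerDist_le_ncard_edgeSet_add_one {SV : Finset V} {SE : Finset G.edgeSet}
    (hcov : ∀ v ∈ SV, ∃ e ∈ SE, v ∈ (e : Sym2 V)) {H : G.lineGraph.Subgraph}
    (hH : H.Connected) (hSE : ↑SE ⊆ H.verts) :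
    steinerDist G SV ≤ H.edgeSet.ncard + 1 := by
  have hSV : ↑SV ⊆ (G.edgeInducedSubgraph H.verts).verts := fun v hv ↦ by
    obtain ⟨e, he, hve⟩ := hcov v hv
    exact ⟨e, hSE he, hve⟩
  calc steinerDist G SV ≤ (G.edgeInducedSubgraph H.verts).edgeSet.ncard :=
        steinerDist_le hH.edgeInducedSubgraph hSV
    _ = H.verts.ncard := ncard_edgeSet_edgeInducedSubgraph _
    _ ≤ H.edgeSet.ncard + 1 := hH.ncard_verts_le_ncard_edgeSet_add_one

end SimpleGraph

theorem steiner_dist_line_graph_general {V : Type*} (T : SimpleGraph V)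
    (hT : T.IsTree) (SV : Finset V) (SE : Finset T.edgeSet)
    (hcov : ∀ v ∈ SV, ∃ e ∈ SE, v ∈ (e : Sym2 V)) :
    steinerDist T SV ≤ steinerDist T.lineGraph SE + 1 := by
  rcases SE.eq_empty_or_nonempty with rfl | ⟨e, -⟩
  · have hSV : SV = ∅ := eq_empty_of_forall_notMem fun v hv ↦ by simpa using hcov v hv
    have := hT.connected.nonempty
    simp [hSV, SimpleGraph.steinerDist_empty]
  · have : Nonempty T.edgeSet := ⟨e⟩
    obtain ⟨H, hH, hSE, hcard⟩ := hT.connected.lineGraph.exists_subgraph_steinerDist SE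
    exact hcard ▸ SimpleGraph.steinerDist_le_ncard_edgeSet_add_one hcov hH hSE

/-- if every vertex of S_V is incident with some edge of S_E, then
d_T(S_V) ≤ d_L(S_E) + 1, where L is the line graph of the tree T. -/
theorem steiner_dist_line_graph {V : Type*} [Fintype V] (T : SimpleGraph V)
    (hT : T.IsTree) (SV : Finset V) (SE : Finset T.edgeSet) (hSE : SE.Nonempty)
    (hcov : ∀ v ∈ SV, ∃ e ∈ SE, v ∈ (e : Sym2 V)) :
    steinerDist T SV ≤ steinerDist T.lineGraph SE + 1 :=
  steiner_dist_line_graph_general T hT SV SE hcov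
end

section
/- Let H be a graph on vertex set A ⊆ V(T) for a tree T, such that d_T(a,b) ≤ r·d_H(a,b) for all a,b ∈ A, and let c be a weight function on V(T) supported on A with restriction c' to A. Then SW_k(T,c) ≤ r·SW_k(H,c'). -/
/-!
Take a connected subgraph `K` of `H` realising the Steiner distance of a set of copies, and
replace each edge `ab` of `K` by a geodesic of `T` from `a` to `b`; it has at most
`r * d_H(a, b) = r` edges. The union of these geodesics is a connected subgraph of `T` containing
the same vertices and having at most `r` times as many edges as `K`. Summing over all `k`-sets of
copies gives the inequality, since `c` vanishes off `A` and so the copies of vertices of `T` are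
exactly the copies of vertices of `A`.
-/

open scoped Classical
open Finset

namespace SimpleGraph

variable {V α β : Type*}

theorem Reachable.map_of_adj_reachable {G₁ : SimpleGraph α} {G₂ : SimpleGraph β} (g : α → β)
    (hg : ∀ x y, G₁.Adj x y → G₂.Reachable (g x) (g y)) {x y : α} (h : G₁.Reachable x y) :
    G₂.Reachable (g x) (g y) := by
  obtain ⟨p⟩ := h
  induction p with
  | nil => rfl
  | cons hadj _ ih => exact (hg _ _ hadj).trans ih

theorem Preconnected.of_reachable_map {G₁ : SimpleGraph α} {G₂ : SimpleGraph β}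
    (hG₁ : G₁.Preconnected) (g : α → β) (hg : ∀ x y, G₁.Adj x y → G₂.Reachable (g x) (g y))
    (hcover : ∀ v, ∃ x, G₂.Reachable v (g x)) : G₂.Preconnected := fun u v => by
  obtain ⟨x, hx⟩ := hcover u
  obtain ⟨y, hy⟩ := hcover v
  exact hx.trans (((hG₁ x y).map_of_adj_reachable g hg).trans hy.symm)

theorem Subgraph.Connected.coe_reachable_of_le {G : SimpleGraph V} {W L : G.Subgraph}
    (hW : W.Connected) (hWL : W ≤ L) {x y : V} (hx : x ∈ W.verts) (hy : y ∈ W.verts) :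
    L.coe.Reachable ⟨x, hWL.1 hx⟩ ⟨y, hWL.1 hy⟩ :=
  (hW.coe ⟨x, hx⟩ ⟨y, hy⟩).map (Subgraph.inclusion hWL)

theorem Walk.ncard_edgeSet_le_length {G : SimpleGraph V} {u v : V} (p : G.Walk u v) :
    p.edgeSet.ncard ≤ p.length := by
  have : p.edgeSet = ↑p.edges.toFinset := by ext; simp [Walk.edgeSet]
  rw [this, Set.ncard_coe_finset, ← p.length_edges]
  exact List.toFinset_card_le _

theorem Reachable.exists_subgraph_ncard_edgeSet_le_dist {G : SimpleGraph V} {u v : V}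
    (h : G.Reachable u v) :
    ∃ P : G.Subgraph, P.Connected ∧ u ∈ P.verts ∧ v ∈ P.verts ∧ P.edgeSet.ncard ≤ G.dist u v := by
  obtain ⟨p, hp⟩ := h.exists_walk_length_eq_dist
  refine ⟨p.toSubgraph, p.toSubgraph_connected, p.start_mem_verts_toSubgraph,
    p.end_mem_verts_toSubgraph, ?_⟩
  rw [Walk.edgeSet_toSubgraph, ← hp]
  exact p.ncard_edgeSet_le_length

end SimpleGraph

namespace SimpleGraph.Subgraph

variable {V α : Type*} {T : SimpleGraph V} {H : SimpleGraph α}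

def realize (K : H.Subgraph) (f : α → V) (P : K.edgeSet → T.Subgraph) : T.Subgraph :=
  (⨆ e, P e) ⊔ ⨆ a : K.verts, T.singletonSubgraph (f a)

variable {K : H.Subgraph} {f : α → V} {P : K.edgeSet → T.Subgraph}

theorem le_realize (e : K.edgeSet) : P e ≤ K.realize f P :=
  (le_iSup P e).trans le_sup_left

theorem apply_mem_verts_realize {a : α} (ha : a ∈ K.verts) : f a ∈ (K.realize f P).verts :=
  Or.inr <| by rw [verts_iSup]; exact Set.mem_iUnion.2 ⟨⟨a, ha⟩, rfl⟩

theorem edgeSet_realize : (K.realize f P).edgeSet = ⋃ e, (P e).edgeSet := by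
  simp [realize]

theorem ncard_edgeSet_realize_le [Finite α] {r : ℕ} (hP : ∀ e, (P e).edgeSet.ncard ≤ r) :
    (K.realize f P).edgeSet.ncard ≤ r * K.edgeSet.ncard := by
  have := Fintype.ofFinite K.edgeSet
  calc (K.realize f P).edgeSet.ncard ≤ ∑ e, (P e).edgeSet.ncard := by
        rw [edgeSet_realize]; exact Set.ncard_iUnion_le_of_fintype _
    _ ≤ Finset.univ.card • r := Finset.sum_le_card_nsmul _ _ _ fun e _ => hP e
    _ = r * K.edgeSet.ncard := by simp [mul_comm]

theorem Connected.realize (hK : K.Connected) (hP : ∀ e, (P e).Connected)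
    (hPf : ∀ e : K.edgeSet, ∀ a ∈ (e : Sym2 α), f a ∈ (P e).verts) :
    (K.realize f P).Connected := by
  obtain ⟨a₀, ha₀⟩ := hK.nonempty
  refine Subgraph.connected_iff.2 ⟨⟨?_⟩, f a₀, apply_mem_verts_realize ha₀⟩
  refine hK.coe.preconnected.of_reachable_map (fun a => ⟨f a, apply_mem_verts_realize a.2⟩) ?_ ?_
  · rintro ⟨a, ha⟩ ⟨b, hb⟩ hab
    exact (hP ⟨s(a, b), hab⟩).coe_reachable_of_le (le_realize _)
      (hPf ⟨s(a, b), hab⟩ a (Sym2.mem_mk_left a b)) (hPf ⟨s(a, b), hab⟩ b (Sym2.mem_mk_right a b))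
  · rintro ⟨u, hu⟩
    have hu' : (∃ e, u ∈ (P e).verts) ∨ ∃ a : K.verts, f a = u := by
      simpa [Subgraph.realize] using hu
    rcases hu' with ⟨e, hue⟩ | ⟨a, rfl⟩
    · have ha := Sym2.out_fst_mem (e : Sym2 α)
      exact ⟨⟨_, K.mem_verts_of_mem_edge e.2 ha⟩,
        (hP e).coe_reachable_of_le (le_realize e) hue (hPf e _ ha)⟩
    · exact ⟨a, Reachable.refl _⟩

end SimpleGraph.Subgraph

section SteinerDistance

variable {V α : Type*}

theorem steinerDist_le_ncard_edgeSet {G : SimpleGraph V} {S : Finset V} {K : G.Subgraph}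
    (hK : K.Connected) (hS : ↑S ⊆ K.verts) : steinerDist G S ≤ K.edgeSet.ncard :=
  Nat.sInf_le ⟨K, hK, hS, rfl⟩

theorem SimpleGraph.Connected.exists_subgraph_ncard_edgeSet_eq_steinerDist {G : SimpleGraph V}
    (hG : G.Connected) (S : Finset V) :
    ∃ K : G.Subgraph, K.Connected ∧ ↑S ⊆ K.verts ∧ K.edgeSet.ncard = steinerDist G S := by
  have hne : {m | ∃ K : G.Subgraph, K.Connected ∧ ↑S ⊆ K.verts ∧ K.edgeSet.ncard = m}.Nonempty :=
    ⟨_, _, hG.toSubgraph le_rfl, by simp, rfl⟩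
  exact Nat.sInf_mem hne

theorem steinerDist_image_le [Finite α] {T : SimpleGraph V} {H : SimpleGraph α}
    (hT : T.Connected) (hH : H.Connected) {f : α → V} {r : ℕ}
    (hf : ∀ a b, H.Adj a b → T.dist (f a) (f b) ≤ r) (B : Finset α) :
    steinerDist T (B.image f) ≤ r * steinerDist H B := by
  obtain ⟨K, hK, hBK, hKB⟩ := hH.exists_subgraph_ncard_edgeSet_eq_steinerDist B
  have hgeodesic : ∀ e : K.edgeSet, ∃ P : T.Subgraph,
      P.Connected ∧ (∀ a ∈ (e : Sym2 α), f a ∈ P.verts) ∧ P.edgeSet.ncard ≤ r := by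
    rintro ⟨e, he⟩
    induction e using Sym2.ind with
    | _ a b =>
      obtain ⟨P, hP, ha, hb, hPd⟩ := (hT (f a) (f b)).exists_subgraph_ncard_edgeSet_le_dist
      refine ⟨P, hP, ?_, hPd.trans (hf a b (K.adj_sub he))⟩
      intro x hx
      rcases Sym2.mem_iff.1 hx with rfl | rfl <;> assumption
  choose P hPc hPf hPr using hgeodesic
  calc steinerDist T (B.image f)
      ≤ (K.realize f P).edgeSet.ncard := by
        refine steinerDist_le_ncard_edgeSet (hK.realize hPc hPf) ?_
        rw [Finset.coe_image]
        rintro _ ⟨a, ha, rfl⟩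
        exact SimpleGraph.Subgraph.apply_mem_verts_realize (hBK ha)
    _ ≤ r * steinerDist H B := hKB ▸ SimpleGraph.Subgraph.ncard_edgeSet_realize_le hPr

theorem wswk_eq_sum_of_support_subset [Fintype V] (k : ℕ) (G : SimpleGraph V) (A : Finset V)
    (c : V → ℕ) (hc : ∀ v, v ∉ A → c v = 0) :
    wswk k G c = ∑ S ∈ powersetCard k (univ : Finset (Σ a : A, Fin (c a))),
      steinerDist G (S.image fun p => (p.1 : V)) := by
  let e := Equiv.sigmaSubtypeEquivOfSubset (fun v => Fin (c v)) (· ∈ A) fun v i => by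
    by_contra hv
    exact i.pos.ne' (hc v hv)
  rw [wswk, ← map_univ_equiv e, powersetCard_map, sum_map]
  congr! 2 with S
  simp only [RelEmbedding.coe_toEmbedding, mapEmbedding_apply, map_eq_image, image_image]
  rfl

end SteinerDistance

/-- if H is a graph on A ⊆ V(T) with d_T(a,b) ≤ r·d_H(a,b) for all
a,b ∈ A, and c is a weight function on V(T) supported on A with restriction c' to A,
then SW_k(T,c) ≤ r·SW_k(H,c'). -/
theorem weighted_steiner_wiener_contraction {V : Type*} [Fintype V]
    (T : SimpleGraph V) (hT : T.IsTree) (A : Finset V) (H : SimpleGraph ↥A)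
    (hH : H.Connected) (r : ℕ)
    (hd : ∀ x y : ↥A, T.dist ↑x ↑y ≤ r * H.dist x y)
    (c : V → ℕ) (hsupp : ∀ v, v ∉ A → c v = 0) (k : ℕ) :
    wswk k T c ≤ r * wswk k H (fun x => c ↑x) := by
  have hadj : ∀ a b, H.Adj a b → T.dist a b ≤ r := fun a b hab => by
    simpa [SimpleGraph.dist_eq_one_iff_adj.2 hab] using hd a b
  rw [wswk_eq_sum_of_support_subset k T A c hsupp, wswk, mul_sum]
  gcongr with S
  -- the two images under `Sigma.fst` use different `DecidableEq ↥A` instances (subtype vs. classical)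
  refine le_of_eq ?_ |>.trans (steinerDist_image_le hT.connected hH hadj _)
  congr 1
  ext
  simp
end

section
/- For the graph G_{d,δ} = K_δ + K_{(δ+1)/3} + ⋯ + K_{(δ+1)/3} + K_δ (sequential sum with d−1 middle blocks), where 3 divides δ+1, the order is n = ((d+5)/3)(δ+1) − 2, the diameter is d, and SW_k(G_{d,δ}) ≥ ((δ+1)/3)^k · ((k−1)(d+2)/(k+1)) · C(d+1, k). -/
open scoped Classical
open Finset

/-- The sequential sum K_{s 0} + K_{s 1} + ⋯ + K_{s (m-1)} of complete graphs: vertices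
in the same block or in consecutive blocks are adjacent. -/
def seqSumComplete (m : ℕ) (s : Fin m → ℕ) : SimpleGraph (Σ i : Fin m, Fin (s i)) where
  Adj x y := x ≠ y ∧ ((x.1 : ℕ) = y.1 ∨ (x.1 : ℕ) + 1 = y.1 ∨ (y.1 : ℕ) + 1 = x.1)
  symm := ⟨by
    rintro x y ⟨h1, h2⟩
    exact ⟨h1.symm, by tauto⟩⟩
  loopless := ⟨fun x h => h.1 rfl⟩

/-! A connected subgraph containing `S` contains a path between the vertices of `S` in its lowest
and highest blocks, so `d(S)` is at least the span `max B - min B` of the set `B` of blocks met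
by `S`. Each `k`-set `B` of blocks is met in this way by at least `t ^ k` sets `S` of `k` vertices
(one vertex in each block of `B`, where `t = (δ + 1) / 3` is the smallest block size). Counting,
for each cut between consecutive blocks, the `k`-sets of blocks lying on both sides of it gives
`(k + 1) * ∑_{|B| = k} (max B - min B) = (k - 1) * (d + 2) * C(d + 1, k)`. -/

namespace SimpleGraph

variable {V : Type*} [Fintype V] {G : SimpleGraph V}

theorem Subgraph.Connected.dist_le_ncard_edgeSet {H : G.Subgraph} (hH : H.Connected) {u v : V}
    (hu : u ∈ H.verts) (hv : v ∈ H.verts) : G.dist u v ≤ H.edgeSet.ncard := by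
  obtain ⟨p, hp, -⟩ := (hH.coe.preconnected ⟨u, hu⟩ ⟨v, hv⟩).exists_path_of_dist
  calc G.dist u v ≤ (p.map H.hom).length := dist_le _
    _ = p.length := Walk.length_map _ _
    _ ≤ H.coe.edgeFinset.card := hp.isTrail.length_le_card_edgeFinset
    _ = H.coe.edgeSet.ncard := by rw [Set.ncard_eq_toFinset_card']; rfl
    _ = H.edgeSet.ncard := by
      rw [← H.image_coe_edgeSet_coe,
        Set.ncard_image_of_injective _ (Sym2.map.injective Subtype.val_injective)]

theorem Preconnected.dist_le_steinerDist (hG : G.Preconnected) {S : Finset V} {u v : V}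
    (hu : u ∈ S) (hv : v ∈ S) : G.dist u v ≤ steinerDist G S := by
  have : Nonempty V := ⟨u⟩
  have hconn : (⊤ : G.Subgraph).Connected :=
    Subgraph.connected_iff'.mpr (Subgraph.topIso.connected_iff.mpr ⟨hG⟩)
  obtain ⟨H, hH, hSH, hcard⟩ := Nat.sInf_mem (s := {m : ℕ | ∃ H : G.Subgraph,
    H.Connected ∧ ↑S ⊆ H.verts ∧ H.edgeSet.ncard = m}) ⟨_, ⊤, hconn, by simp, rfl⟩
  rw [steinerDist, ← hcard]
  exact hH.dist_le_ncard_edgeSet (hSH hu) (hSH hv)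

end SimpleGraph

theorem sum_range_choose_eq_choose_succ (n k : ℕ) :
    ∑ i ∈ range n, i.choose k = n.choose (k + 1) := by
  induction n with
  | zero => simp
  | succ n ih => rw [sum_range_succ, ih, Nat.choose_succ_succ', add_comm]

section cutCount

variable {n : ℕ}

def Straddles (B : Finset (Fin n)) (x : Fin n) : Prop :=
  (∃ b ∈ B, b ≤ x) ∧ ∃ b ∈ B, x < b

/-- For nonempty `B` this is `max B - min B`. -/
noncomputable def cutCount (B : Finset (Fin n)) : ℕ :=
  #{x | Straddles B x}

theorem cutCount_le_of_forall_mem_Icc {B : Finset (Fin n)} {i j : Fin n}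
    (hB : ∀ b ∈ B, i ≤ b ∧ b ≤ j) : cutCount B ≤ j - i := by
  rw [← Fin.card_Ico]
  refine card_le_card fun x hx => ?_
  obtain ⟨⟨b, hb, hbx⟩, ⟨b', hb', hxb'⟩⟩ := (mem_filter.mp hx).2
  exact mem_Ico.mpr ⟨(hB b hb).1.trans hbx, hxb'.trans_le (hB b' hb').2⟩

theorem card_straddles_add_choose_add_choose {k : ℕ} (hk : 1 ≤ k) (x : Fin n) :
    #{B ∈ powersetCard k (univ : Finset (Fin n)) | Straddles B x} + (x + 1 : ℕ).choose k +
      (n - 1 - x).choose k = n.choose k := by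
  have hnot : {B ∈ powersetCard k (univ : Finset (Fin n)) | ¬ Straddles B x} =
      powersetCard k (Iic x) ∪ powersetCard k (Ioi x) := by
    ext B
    simp only [Straddles, mem_filter, mem_powersetCard, mem_union, subset_iff, mem_univ,
      implies_true, true_and, mem_Iic, mem_Ioi, not_and_or, not_exists, not_le, not_lt,
      ← imp_iff_not_or]
    tauto
  have hdisj : Disjoint (powersetCard k (Iic x)) (powersetCard k (Ioi x)) := by
    refine disjoint_left.mpr fun B h₁ h₂ => ?_
    obtain ⟨b, hb⟩ := card_pos.mp ((mem_powersetCard.mp h₁).2 ▸ hk)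
    exact (mem_Iic.mp ((mem_powersetCard.mp h₁).1 hb)).not_gt
      (mem_Ioi.mp ((mem_powersetCard.mp h₂).1 hb))
  have := card_filter_add_card_filter_not (s := powersetCard k (univ : Finset (Fin n)))
    (fun B => Straddles B x)
  rw [hnot, card_union_of_disjoint hdisj, card_powersetCard, card_powersetCard,
    card_powersetCard, Fin.card_Iic, Fin.card_Ioi, card_univ, Fintype.card_fin] at this
  omega

theorem sum_cutCount_add_choose_add_choose {k : ℕ} (hk : 1 ≤ k) :
    ∑ B ∈ powersetCard k (univ : Finset (Fin n)), cutCount B + (n + 1).choose (k + 1) +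
      n.choose (k + 1) = n * n.choose k := by
  have hswap : ∑ B ∈ powersetCard k (univ : Finset (Fin n)), cutCount B =
      ∑ x : Fin n, #{B ∈ powersetCard k (univ : Finset (Fin n)) | Straddles B x} := by
    simp only [cutCount, card_filter]
    exact sum_comm
  have hlow : ∑ x : Fin n, (x + 1 : ℕ).choose k = (n + 1).choose (k + 1) := by
    rw [Fin.sum_univ_eq_sum_range (fun i => (i + 1).choose k), ← sum_range_choose_eq_choose_succ,
      sum_range_succ', Nat.choose_eq_zero_of_lt hk, add_zero]
  have hhigh : ∑ x : Fin n, (n - 1 - x).choose k = n.choose (k + 1) := by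
    rw [Fin.sum_univ_eq_sum_range (fun i => (n - 1 - i).choose k),
      ← sum_range_choose_eq_choose_succ, ← sum_range_reflect]
    refine sum_congr rfl fun j hj => ?_
    rw [Nat.sub_sub_self (by have := mem_range.mp hj; omega)]
  have hcount := sum_congr rfl fun x (_ : x ∈ (univ : Finset (Fin n))) =>
    card_straddles_add_choose_add_choose hk x
  rw [sum_add_distrib, sum_add_distrib, hlow, hhigh, ← hswap] at hcount
  simpa using hcount

theorem succ_mul_sum_cutCount (k : ℕ) :
    (k + 1) * ∑ B ∈ powersetCard k (univ : Finset (Fin n)), cutCount B =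
      (k - 1) * (n + 1) * n.choose k := by
  rcases Nat.eq_zero_or_pos k with rfl | hk
  · simp [cutCount, Straddles]
  have hsum := sum_cutCount_add_choose_add_choose (n := n) hk
  have hpascal := Nat.choose_succ_succ' n k
  have habsorb := Nat.add_one_mul_choose_eq n k
  obtain ⟨j, rfl⟩ : ∃ j, k = j + 1 := ⟨k - 1, by omega⟩
  rw [Nat.add_sub_cancel]
  zify at hsum hpascal habsorb ⊢
  linear_combination (j + 2 : ℤ) * hsum + (j + 2 : ℤ) * hpascal + 2 * habsorb

end cutCount

theorem prod_card_le_card_filter_image_fst {ι : Type*} [Fintype ι] [DecidableEq ι]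
    {κ : ι → Type*} [∀ i, Fintype (κ i)] (B : Finset ι) :
    ∏ i ∈ B, Fintype.card (κ i) ≤
      #{S ∈ powersetCard #B (univ : Finset (Σ i, κ i)) | S.image Sigma.fst = B} := by
  let transversal (g : (i : B) → κ i) : Finset (Σ i, κ i) :=
    univ.map ⟨fun i => ⟨i.1, g i⟩, fun i j h => Subtype.ext (congrArg Sigma.fst h)⟩
  have hmem : ∀ g, transversal g ∈
      ({S ∈ powersetCard #B univ | S.image Sigma.fst = B} : Finset (Finset (Σ i, κ i))) := by
    intro g
    refine mem_filter.mpr ⟨mem_powersetCard.mpr ⟨subset_univ _, ?_⟩, ?_⟩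
    · rw [card_map, card_univ, Fintype.card_coe]
    · simp only [transversal, map_eq_image, image_image, univ_eq_attach]
      exact attach_image_val
  have hinj : Function.Injective transversal := by
    intro g g' h
    funext i
    have hi : (⟨i.1, g i⟩ : Σ i, κ i) ∈ transversal g' :=
      h ▸ mem_map_of_mem _ (mem_univ i)
    obtain ⟨j, -, hj⟩ := mem_map.mp hi
    obtain rfl : j = i := Subtype.ext (congrArg Sigma.fst hj)
    exact (eq_of_heq (Sigma.mk.inj_iff.mp hj).2).symm
  calc ∏ i ∈ B, Fintype.card (κ i) = Fintype.card ((i : B) → κ i) := by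
        rw [Fintype.card_pi, prod_coe_sort B fun i => Fintype.card (κ i)]
    _ ≤ _ := card_le_card_of_injOn transversal (fun g _ => hmem g) hinj.injOn

section seqSumComplete

open SimpleGraph

variable {m : ℕ} {s : Fin m → ℕ}

theorem seqSumComplete_index_le_add_length {x y : Σ i : Fin m, Fin (s i)}
    (w : (seqSumComplete m s).Walk x y) : (y.1 : ℕ) ≤ x.1 + w.length := by
  induction w with
  | nil => simp
  | cons h _ ih => rcases h.2 with h | h | h <;> simp only [Walk.length_cons] <;> omega

theorem seqSumComplete_exists_walk_length_le (hs : ∀ i, 0 < s i)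
    {x y : Σ i : Fin m, Fin (s i)} (hxy : (x.1 : ℕ) ≤ y.1) :
    ∃ w : (seqSumComplete m s).Walk x y, w.length ≤ max 1 ((y.1 : ℕ) - x.1) := by
  induction hr : (y.1 : ℕ) - x.1 generalizing x with
  | zero =>
    by_cases hxy' : x = y
    · subst hxy'
      exact ⟨Walk.nil, by simp⟩
    · exact ⟨Walk.cons ⟨hxy', Or.inl (by omega)⟩ Walk.nil, le_refl _⟩
  | succ r ih =>
    have hne : x ≠ y := by rintro rfl; omega
    rcases Nat.eq_zero_or_pos r with rfl | hr0
    · exact ⟨Walk.cons ⟨hne, Or.inr (Or.inl (by omega))⟩ Walk.nil, le_refl _⟩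
    have := y.1.isLt
    let z : Σ i : Fin m, Fin (s i) := ⟨⟨x.1 + 1, by omega⟩, ⟨0, hs _⟩⟩
    have hxz : (seqSumComplete m s).Adj x z :=
      ⟨fun h => by simpa [z] using congrArg (fun v => (v.1 : ℕ)) h, Or.inr (Or.inl rfl)⟩
    obtain ⟨w, hw⟩ := ih (x := z) (by simp [z]; omega) (by simp [z]; omega)
    exact ⟨Walk.cons hxz w, by simp only [Walk.length_cons]; omega⟩

theorem seqSumComplete_preconnected (hs : ∀ i, 0 < s i) : (seqSumComplete m s).Preconnected := by
  intro x y
  rcases le_total (x.1 : ℕ) y.1 with h | h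
  · exact (seqSumComplete_exists_walk_length_le hs h).elim fun w _ => ⟨w⟩
  · exact (seqSumComplete_exists_walk_length_le hs h).elim fun w _ => ⟨w.reverse⟩

theorem seqSumComplete_index_le_add_dist (hs : ∀ i, 0 < s i) (x y : Σ i : Fin m, Fin (s i)) :
    (y.1 : ℕ) ≤ x.1 + (seqSumComplete m s).dist x y := by
  obtain ⟨w, hw⟩ := (seqSumComplete_preconnected hs x y).exists_walk_length_eq_dist
  exact hw ▸ seqSumComplete_index_le_add_length w

theorem seqSumComplete_dist_le (hs : ∀ i, 0 < s i) {x y : Σ i : Fin m, Fin (s i)}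
    (hxy : (x.1 : ℕ) ≤ y.1) : (seqSumComplete m s).dist x y ≤ max 1 ((y.1 : ℕ) - x.1) := by
  obtain ⟨w, hw⟩ := seqSumComplete_exists_walk_length_le hs hxy
  exact (dist_le w).trans hw

theorem seqSumComplete_diam {d : ℕ} (hd : 1 ≤ d) {s : Fin (d + 1) → ℕ}
    (hs : ∀ i, 0 < s i) :
    (seqSumComplete (d + 1) s).diam = d := by
  set G := seqSumComplete (d + 1) s
  let first : Σ i : Fin (d + 1), Fin (s i) := ⟨0, ⟨0, hs 0⟩⟩
  have : Nonempty (Σ i : Fin (d + 1), Fin (s i)) := ⟨first⟩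
  have hconn : G.Connected := ⟨seqSumComplete_preconnected hs⟩
  apply le_antisymm
  · obtain ⟨u, v, huv⟩ := G.exists_dist_eq_diam
    rw [← huv]
    have := u.1.isLt
    have := v.1.isLt
    rcases le_total (u.1 : ℕ) v.1 with h | h
    · exact (seqSumComplete_dist_le hs h).trans (max_le hd (by omega))
    · exact G.dist_comm ▸ (seqSumComplete_dist_le hs h).trans (max_le hd (by omega))
  · let last : Σ i : Fin (d + 1), Fin (s i) := ⟨Fin.last d, ⟨0, hs _⟩⟩
    have := seqSumComplete_index_le_add_dist hs first last
    refine le_trans ?_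
      (dist_le_diam (u := first) (v := last) (connected_iff_ediam_ne_top.mp hconn))
    simpa [first, last] using this

theorem cutCount_image_fst_le_steinerDist (hs : ∀ i, 0 < s i)
    (S : Finset (Σ i : Fin m, Fin (s i))) :
    cutCount (S.image Sigma.fst) ≤ steinerDist (seqSumComplete m s) S := by
  rcases S.eq_empty_or_nonempty with rfl | hS
  · simp [cutCount, Straddles]
  obtain ⟨u, hu, hmin⟩ := S.exists_min_image Sigma.fst hS
  obtain ⟨v, hv, hmax⟩ := S.exists_max_image Sigma.fst hS
  have hspan : cutCount (S.image Sigma.fst) ≤ (v.1 : ℕ) - u.1 :=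
    cutCount_le_of_forall_mem_Icc <| by
      simpa only [mem_image, forall_exists_index, and_imp, forall_apply_eq_imp_iff₂]
        using fun x hx => ⟨hmin x hx, hmax x hx⟩
  have hdist := seqSumComplete_index_le_add_dist hs u v
  have hsteiner := (seqSumComplete_preconnected hs).dist_le_steinerDist hu hv
  omega

theorem pow_mul_sum_cutCount_le_swk (hs : ∀ i, 0 < s i) {t : ℕ} (ht : ∀ i, t ≤ s i)
    (k : ℕ) :
    t ^ k * ∑ B ∈ powersetCard k (univ : Finset (Fin m)), cutCount B ≤
      swk k (seqSumComplete m s) := by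
  set P := powersetCard k (univ : Finset (Σ i : Fin m, Fin (s i)))
  have hfiber : ∀ B ∈ powersetCard k (univ : Finset (Fin m)),
      t ^ k ≤ #{S ∈ P | S.image Sigma.fst = B} := by
    intro B hB
    have hBk := (mem_powersetCard.mp hB).2
    calc t ^ k = t ^ #B := by rw [hBk]
      _ ≤ ∏ i ∈ B, Fintype.card (Fin (s i)) := by
        simpa only [Fintype.card_fin] using pow_card_le_prod B s t fun i _ => ht i
      _ ≤ #{S ∈ P | S.image Sigma.fst = B} := by
        simpa only [P, hBk] using prod_card_le_card_filter_image_fst (κ := fun i => Fin (s i)) B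
  calc t ^ k * ∑ B ∈ powersetCard k univ, cutCount B
      = ∑ B ∈ powersetCard k univ, t ^ k * cutCount B := mul_sum _ _ _
    _ ≤ ∑ B ∈ powersetCard k univ, #{S ∈ P | S.image Sigma.fst = B} • cutCount B :=
        sum_le_sum fun B hB => Nat.mul_le_mul_right _ (hfiber B hB)
    _ ≤ ∑ B ∈ powersetCard k univ, ∑ S ∈ P with S.image Sigma.fst = B,
          steinerDist (seqSumComplete m s) S :=
        sum_le_sum fun B _ => card_nsmul_le_sum _ _ _ fun S hS =>
          (mem_filter.mp hS).2 ▸ cutCount_image_fst_le_steinerDist hs S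
    _ ≤ swk k (seqSumComplete m s) :=
        sum_fiberwise_le_sum_of_sum_fiber_nonneg fun _ _ => Nat.zero_le _

end seqSumComplete

theorem sum_ite_zero_or_last {d : ℕ} (hd : 1 ≤ d) (a b : ℕ) :
    ∑ i : Fin (d + 1), (if (i : ℕ) = 0 ∨ (i : ℕ) = d then a else b) =
      2 * a + (d - 1) * b := by
  obtain ⟨e, rfl⟩ : ∃ e, d = e + 1 := ⟨d - 1, by omega⟩
  have hmid : ∀ j : Fin e, ¬((j : ℕ) + 1 = 0 ∨ (j : ℕ) + 1 = e + 1) := fun j => by omega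
  rw [Fin.sum_univ_succ, Fin.sum_univ_castSucc]
  simp only [Fin.val_succ, Fin.val_castSucc, Fin.val_last, Fin.val_zero, hmid, true_or, or_true,
    if_true, if_false, sum_const, card_univ, Fintype.card_fin, smul_eq_mul, Nat.add_sub_cancel]
  ring

/-- for G_{d,δ} = K_δ + K_{(δ+1)/3} + ⋯ + K_{(δ+1)/3} + K_δ with d−1
middle blocks (3 ∣ δ+1), the order is (d+5)(δ+1)/3 − 2, the diameter is d, and
SW_k ≥ ((δ+1)/3)^k·((k−1)(d+2)/(k+1))·C(d+1,k) (stated multiplied by (k+1)). -/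
theorem steiner_wiener_extremal_example (d δ k : ℕ) (hd : 1 ≤ d) (hδ : 3 ∣ δ + 1) :
    let G := seqSumComplete (d + 1)
      (fun i => if (i : ℕ) = 0 ∨ (i : ℕ) = d then δ else (δ + 1) / 3)
    Fintype.card (Σ i : Fin (d + 1),
        Fin (if (i : ℕ) = 0 ∨ (i : ℕ) = d then δ else (δ + 1) / 3)) =
      (d + 5) * (δ + 1) / 3 - 2 ∧
    G.diam = d ∧
    ((δ + 1) / 3) ^ k * ((k - 1) * (d + 2)) * Nat.choose (d + 1) k ≤ (k + 1) * swk k G := by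
  intro G
  obtain ⟨t, ht⟩ := hδ
  have hdiv : (δ + 1) / 3 = t := by omega
  have hge : ∀ i : Fin (d + 1),
      t ≤ if (i : ℕ) = 0 ∨ (i : ℕ) = d then δ else (δ + 1) / 3 := fun i => by
    split <;> omega
  have hpos : ∀ i : Fin (d + 1),
      0 < if (i : ℕ) = 0 ∨ (i : ℕ) = d then δ else (δ + 1) / 3 := fun i => by
    have := hge i; omega
  refine ⟨?_, seqSumComplete_diam hd hpos, ?_⟩
  · rw [Fintype.card_sigma]
    simp only [Fintype.card_fin]
    rw [sum_ite_zero_or_last hd, hdiv, ht, mul_left_comm, Nat.mul_div_cancel_left _ (by norm_num)]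
    obtain ⟨e, rfl⟩ : ∃ e, d = e + 1 := ⟨d - 1, by omega⟩
    rw [Nat.add_sub_cancel, show (e + 1 + 5) * t = e * t + 6 * t by ring]
    omega
  · calc ((δ + 1) / 3) ^ k * ((k - 1) * (d + 2)) * (d + 1).choose k
        = t ^ k * ((k + 1) * ∑ B ∈ powersetCard k (univ : Finset (Fin (d + 1))),
            cutCount B) := by
          rw [succ_mul_sum_cutCount, hdiv]; ring
      _ ≤ (k + 1) * swk k G := by
          rw [mul_left_comm]
          exact Nat.mul_le_mul_left _ (pow_mul_sum_cutCount_le_swk hpos hge k)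
end
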